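/- arXiv:2205.05425 — 4 statements merged into one kernel-verified Lean document; each statement's English description precedes it below -/
import Mathlib

section
/- Under the ergodic grouped M-estimation setting, assume additionally that (i) for every τ ∈ 𝒢 the population criterion S(·, τ) attains a unique minimum on Θ at a point θ*(τ), and (ii) (identification of the true assignment) there is a distinguished element τ₀ ∈ 𝒢 such that S(θ, τ) > S(θ*(τ₀), τ₀) for every θ ∈ Θ and every τ ∈ 𝒢 with τ ≠ τ₀. Let θ̃ₙ : 𝒢 × Ω → Θ be measurable maps such that for every τ ∈ 𝒢 and P-almost every ω, Sₙ(θ̃ₙ(τ, ω), τ)(ω) = min_{θ∈Θ} Sₙ(θ, τ)(ω), and let τ̂ₙ : Ω → 𝒢 be measurable maps such that for P-almost every ω, Sₙ(θ̃ₙ(τ̂ₙ(ω), ω), τ̂ₙ(ω))(ω) = min_{τ∈𝒢} Sₙ(θ̃ₙ(τ, ω), τ)(ω). Then the estimated group assignment is consistent: P(τ̂ₙ ≠ τ₀) → 0 as n → ∞. -/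
/-!
If `τ̂ₙ = τ ≠ τ₀`, then for any level `c` strictly between `S(θ*(τ₀), τ₀)` and
`min_Θ S(·, τ) = S(θ*(τ), τ)`, either the sample criterion at `(θ*(τ₀), τ₀)` is at least `c`, or
`Sₙ(·, τ)` drops to `c` somewhere on `Θ`. The first event has vanishing probability by the mean
ergodic theorem in `L¹`, obtained from von Neumann's `L²` theorem by density of simple functions.
The second is Wald's argument: around each `θ₀ ∈ Θ`, the infimum of `ρ` over a small ball is an
integrable minorant whose mean still exceeds `c` (dominated convergence), the ergodic theorem
controls its Birkhoff averages, and compactness of `Θ` leaves finitely many balls.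
-/

open MeasureTheory Filter Topology

section Koopman

variable {Ω : Type*} [MeasurableSpace Ω] {μ : Measure Ω} {T : Ω → Ω}

noncomputable def koopman (p : ENNReal) [Fact (1 ≤ p)] (hT : MeasurePreserving T μ μ) :
    Lp ℝ p μ →L[ℝ] Lp ℝ p μ :=
  (Lp.compMeasurePreservingₗᵢ ℝ T hT).toContinuousLinearMap

variable {p : ENNReal} [Fact (1 ≤ p)]

theorem koopman_iterate_ae_eq (hT : MeasurePreserving T μ μ) (g : Lp ℝ p μ) (k : ℕ) :
    ⇑((koopman p hT)^[k] g) =ᵐ[μ] g ∘ T^[k] := by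
  have : ⇑(koopman p hT) = Lp.compMeasurePreserving T hT := rfl
  rw [this, Lp.compMeasurePreserving_iterate]
  exact Lp.coeFn_compMeasurePreserving g _

theorem birkhoffAverage_koopman_ae_eq (hT : MeasurePreserving T μ μ) (g : Lp ℝ p μ) (n : ℕ) :
    ⇑(birkhoffAverage ℝ (koopman p hT) id n g) =ᵐ[μ] birkhoffAverage ℝ T g n := by
  have hsum : ∀ m, ⇑(birkhoffSum (koopman p hT) id m g) =ᵐ[μ] birkhoffSum T g m := by
    intro m
    induction m with
    | zero => simpa [birkhoffSum_zero'] using Lp.coeFn_zero ℝ p μ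
    | succ m ih =>
      filter_upwards [Lp.coeFn_add (birkhoffSum (koopman p hT) id m g) ((koopman p hT)^[m] g),
        ih, koopman_iterate_ae_eq hT g m] with ω hadd hm hk
      simp only [birkhoffSum_succ, id, hadd, Pi.add_apply, hm, hk, Function.comp_apply]
  filter_upwards [Lp.coeFn_smul (n : ℝ)⁻¹ (birkhoffSum (koopman p hT) id n g), hsum n]
    with ω hsmul hn
  simp only [birkhoffAverage, hsmul, Pi.smul_apply, hn]

theorem Ergodic.exists_eq_const_of_koopman_eq [IsFiniteMeasure μ] (hT : Ergodic T μ)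
    {g : Lp ℝ p μ} (hg : koopman p hT.toMeasurePreserving g = g) : ∃ c, g = Lp.const p μ c := by
  have hinv : ⇑g ∘ T =ᵐ[μ] g := by
    simpa [hg] using (koopman_iterate_ae_eq hT.toMeasurePreserving g 1).symm
  obtain ⟨c, hc⟩ :=
    hT.ae_eq_const_of_ae_eq_comp₀ (Lp.aestronglyMeasurable g).aemeasurable.nullMeasurable hinv
  exact ⟨c, Lp.ext (hc.trans (Lp.coeFn_const p μ c).symm)⟩

theorem koopman_const [IsFiniteMeasure μ] (hT : MeasurePreserving T μ μ) (c : ℝ) :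
    koopman p hT (Lp.const p μ c) = Lp.const p μ c := by
  refine Lp.ext ?_
  filter_upwards [koopman_iterate_ae_eq hT (Lp.const p μ c) 1,
    hT.quasiMeasurePreserving.ae (Lp.coeFn_const p μ c), Lp.coeFn_const p μ c]
    with ω hU hcT hc
  simp_all

theorem coeFn_birkhoffAverage_koopman_sub_const [IsFiniteMeasure μ]
    (hT : MeasurePreserving T μ μ) (g : Lp ℝ p μ) (n : ℕ) (c : ℝ) :
    ⇑(birkhoffAverage ℝ (koopman p hT) id n g - Lp.const p μ c) =ᵐ[μ]
      birkhoffAverage ℝ T g n - fun _ => c := by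
  filter_upwards [Lp.coeFn_sub (birkhoffAverage ℝ (koopman p hT) id n g) (Lp.const p μ c),
    birkhoffAverage_koopman_ae_eq hT g n, Lp.coeFn_const p μ c] with ω hsub havg hc
  simp only [hsub, Pi.sub_apply, havg, hc, Function.const_apply]

end Koopman

section MeanErgodic

variable {Ω : Type*} [MeasurableSpace Ω] {μ : Measure Ω} {T : Ω → Ω}

theorem MeasureTheory.L2.inner_const_one [IsFiniteMeasure μ] (g : Lp ℝ 2 μ) :
    inner ℝ (Lp.const 2 μ (1 : ℝ)) g = ∫ ω, g ω ∂μ := by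
  rw [← indicatorConstLp_univ, L2.inner_indicatorConstLp_one, setIntegral_univ]

theorem Ergodic.tendsto_birkhoffAverage_koopman_two [IsProbabilityMeasure μ] (hT : Ergodic T μ)
    (g : Lp ℝ 2 μ) :
    Tendsto (birkhoffAverage ℝ (koopman 2 hT.toMeasurePreserving) id · g) atTop
      (𝓝 (Lp.const 2 μ (∫ ω, g ω ∂μ))) := by
  set U := koopman 2 hT.toMeasurePreserving
  set K := U.eqLocus (1 : Lp ℝ 2 μ →L[ℝ] Lp ℝ 2 μ)
  have hvN := U.tendsto_birkhoffAverage_orthogonalProjection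
    (LinearIsometry.norm_toContinuousLinearMap_le _) g
  -- The limit is a fixed point, hence a constant `c` by ergodicity; as the fixed vector `1` is
  -- orthogonal to `g - c`, that constant is `∫ g`.
  obtain ⟨c, hc⟩ := hT.exists_eq_const_of_koopman_eq (K.orthogonalProjectionOnto g).2
  have hone : Lp.const 2 μ (1 : ℝ) ∈ K := koopman_const _ 1
  have hmean : ∫ ω, g ω ∂μ = c := by
    have horth := K.starProjection_inner_eq_zero g _ hone
    rw [inner_sub_left, sub_eq_zero, K.starProjection_apply, hc, real_inner_comm,
      real_inner_comm _ (Lp.const 2 μ c), L2.inner_const_one, L2.inner_const_one] at horth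
    simpa using horth
  rw [hmean, ← hc]
  exact hvN

theorem Ergodic.tendsto_birkhoffAverage_koopman_one_of_memLp_two [IsProbabilityMeasure μ]
    (hT : Ergodic T μ) {g : Lp ℝ 1 μ} (hg : MemLp g 2 μ) :
    Tendsto (birkhoffAverage ℝ (koopman 1 hT.toMeasurePreserving) id · g) atTop
      (𝓝 (Lp.const 1 μ (∫ ω, g ω ∂μ))) := by
  have hg₂ : ⇑(hg.toLp g) =ᵐ[μ] g := hg.coeFn_toLp
  have h₂ := hT.tendsto_birkhoffAverage_koopman_two (hg.toLp g)
  rw [integral_congr_ae hg₂, tendsto_iff_dist_tendsto_zero] at h₂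
  rw [tendsto_iff_dist_tendsto_zero]
  refine squeeze_zero (fun _ => dist_nonneg) (fun n => ?_) h₂
  have hT' := hT.toMeasurePreserving
  have hF := (coeFn_birkhoffAverage_koopman_sub_const hT' (hg.toLp g) n (∫ ω, g ω ∂μ)).trans
    ((hT'.quasiMeasurePreserving.birkhoffAverage_ae_eq_of_ae_eq ℝ hg₂ n).sub (ae_eq_refl _) |>.trans
      (coeFn_birkhoffAverage_koopman_sub_const hT' g n _).symm)
  rw [dist_eq_norm, dist_eq_norm, Lp.norm_def, Lp.norm_def, eLpNorm_congr_ae hF]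
  exact ENNReal.toReal_mono ((eLpNorm_congr_ae hF).symm ▸ Lp.eLpNorm_ne_top _)
    (eLpNorm_le_eLpNorm_of_exponent_le one_le_two (Lp.aestronglyMeasurable _))

theorem Ergodic.tendsto_birkhoffAverage_koopman_one [IsProbabilityMeasure μ] (hT : Ergodic T μ)
    (g : Lp ℝ 1 μ) :
    Tendsto (birkhoffAverage ℝ (koopman 1 hT.toMeasurePreserving) id · g) atTop
      (𝓝 (Lp.const 1 μ (∫ ω, g ω ∂μ))) := by
  -- Birkhoff averages of an isometry are equicontinuous, so the set of `g` for which they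
  -- converge to the mean is closed; simple functions are dense in `L¹` and lie in `L²`.
  refine (Lp.simpleFunc.isDenseEmbedding ENNReal.one_ne_top).dense.induction_on g ?_ fun s => ?_
  · exact isClosed_setOfPred_tendsto_birkhoffAverage ℝ
      (Lp.compMeasurePreservingₗᵢ ℝ T hT.toMeasurePreserving).lipschitz uniformContinuous_id
      ((Lp.constL 1 μ ℝ).continuous.comp continuous_integral)
  · exact hT.tendsto_birkhoffAverage_koopman_one_of_memLp_two
      (((Lp.simpleFunc.toSimpleFunc s).memLp_of_isFiniteMeasure 2 μ).ae_eq
        (Lp.simpleFunc.toSimpleFunc_eq_toFun s))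

theorem Ergodic.tendstoInMeasure_birkhoffAverage [IsProbabilityMeasure μ] (hT : Ergodic T μ)
    {f : Ω → ℝ} (hf : Integrable f μ) :
    TendstoInMeasure μ (birkhoffAverage ℝ T f) atTop fun _ => ∫ ω, f ω ∂μ := by
  have hL1 := tendstoInMeasure_of_tendsto_Lp (hT.tendsto_birkhoffAverage_koopman_one (hf.toL1 f))
  refine hL1.congr (fun n => ?_) ?_
  · exact (birkhoffAverage_koopman_ae_eq _ _ n).trans
      (hT.quasiMeasurePreserving.birkhoffAverage_ae_eq_of_ae_eq ℝ hf.coeFn_toL1 n)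
  · rw [integral_congr_ae hf.coeFn_toL1]
    exact Lp.coeFn_const 1 μ _

theorem MeasureTheory.TendstoInMeasure.tendsto_measure_setOf_le {F : ℕ → Ω → ℝ} {a c : ℝ}
    (h : TendstoInMeasure μ F atTop fun _ => a) (hc : c < a) :
    Tendsto (fun n => μ {ω | F n ω ≤ c}) atTop (𝓝 0) := by
  refine tendsto_of_tendsto_of_tendsto_of_le_of_le tendsto_const_nhds
    (tendstoInMeasure_iff_dist.1 h _ (sub_pos.2 hc)) (fun _ => zero_le) fun n => ?_
  refine measure_mono fun ω (hω : F n ω ≤ c) => ?_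
  rw [Set.mem_ofPred_eq, Real.dist_eq]
  linarith [neg_abs_le (F n ω - a)]

theorem MeasureTheory.TendstoInMeasure.tendsto_measure_setOf_ge {F : ℕ → Ω → ℝ} {a c : ℝ}
    (h : TendstoInMeasure μ F atTop fun _ => a) (hc : a < c) :
    Tendsto (fun n => μ {ω | c ≤ F n ω}) atTop (𝓝 0) := by
  refine tendsto_of_tendsto_of_tendsto_of_le_of_le tendsto_const_nhds
    (tendstoInMeasure_iff_dist.1 h _ (sub_pos.2 hc)) (fun _ => zero_le) fun n => ?_
  refine measure_mono fun ω (hω : c ≤ F n ω) => ?_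
  rw [Set.mem_ofPred_eq, Real.dist_eq]
  linarith [le_abs_self (F n ω - a)]

end MeanErgodic

section BallInf

variable {Ω E : Type*} [PseudoMetricSpace E] {K D : Set E} {f : E → Ω → ℝ} {G : Ω → ℝ}
  {θ₀ : E} {δ : ℝ}

/-- Taken over a countable dense `D` rather than over `K` itself, so that it is measurable. -/
noncomputable def ballInf (f : E → Ω → ℝ) (D : Set E) (θ₀ : E) (δ : ℝ) (ω : Ω) : ℝ :=
  ⨅ θ : ↥(D ∩ Metric.ball θ₀ δ), f θ ω

theorem nonempty_inter_ball (hKD : K ⊆ closure D) (hθ₀ : θ₀ ∈ K) (hδ : 0 < δ) :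
    (D ∩ Metric.ball θ₀ δ).Nonempty := by
  rw [Set.inter_comm]
  exact mem_closure_iff_nhds.1 (hKD hθ₀) _ (Metric.ball_mem_nhds θ₀ hδ)

theorem bddBelow_range_inter_ball (hDK : D ⊆ K) (hfG : ∀ θ ∈ K, ∀ ω, |f θ ω| ≤ G ω) (ω : Ω) :
    BddBelow (Set.range fun θ : ↥(D ∩ Metric.ball θ₀ δ) => f θ ω) :=
  ⟨-G ω, by rintro _ ⟨θ, rfl⟩; exact neg_le_of_abs_le (hfG θ (hDK θ.2.1) ω)⟩

theorem le_ballInf {ω : Ω} {b : ℝ} (hne : (D ∩ Metric.ball θ₀ δ).Nonempty)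
    (hb : ∀ θ ∈ D ∩ Metric.ball θ₀ δ, b ≤ f θ ω) : b ≤ ballInf f D θ₀ δ ω :=
  have := hne.to_subtype
  le_ciInf fun θ => hb θ θ.2

theorem ballInf_le (hDK : D ⊆ K) (hKD : K ⊆ closure D) (hcont : ∀ ω, ContinuousOn (f · ω) K)
    (hfG : ∀ θ ∈ K, ∀ ω, |f θ ω| ≤ G ω) {θ : E} (hθ : θ ∈ K ∩ Metric.ball θ₀ δ) (ω : Ω) :
    ballInf f D θ₀ δ ω ≤ f θ ω := by
  have hcl : θ ∈ closure (D ∩ Metric.ball θ₀ δ) := by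
    rw [Set.inter_comm]
    exact Metric.isOpen_ball.inter_closure ⟨hθ.2, hKD hθ.1⟩
  exact ContinuousWithinAt.closure_le (f := fun _ => ballInf f D θ₀ δ ω) (g := (f · ω)) hcl
    continuousWithinAt_const ((hcont ω θ hθ.1).mono fun x hx => hDK hx.1)
    fun y hy => ciInf_le (bddBelow_range_inter_ball hDK hfG ω) ⟨y, hy⟩

theorem abs_ballInf_le (hDK : D ⊆ K) (hKD : K ⊆ closure D) (hcont : ∀ ω, ContinuousOn (f · ω) K)
    (hfG : ∀ θ ∈ K, ∀ ω, |f θ ω| ≤ G ω) (hθ₀ : θ₀ ∈ K) (hδ : 0 < δ) (ω : Ω) :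
    |ballInf f D θ₀ δ ω| ≤ G ω :=
  abs_le.2 ⟨le_ballInf (nonempty_inter_ball hKD hθ₀ hδ) fun θ hθ =>
      neg_le_of_abs_le (hfG θ (hDK hθ.1) ω),
    (ballInf_le hDK hKD hcont hfG ⟨hθ₀, Metric.mem_ball_self hδ⟩ ω).trans
      (le_of_abs_le (hfG θ₀ hθ₀ ω))⟩

theorem tendsto_ballInf (hDK : D ⊆ K) (hKD : K ⊆ closure D) (hcont : ∀ ω, ContinuousOn (f · ω) K)
    (hfG : ∀ θ ∈ K, ∀ ω, |f θ ω| ≤ G ω) (hθ₀ : θ₀ ∈ K) (ω : Ω) :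
    Tendsto (fun δ => ballInf f D θ₀ δ ω) (𝓝[>] 0) (𝓝 (f θ₀ ω)) := by
  refine tendsto_order.2 ⟨fun a ha => ?_, fun a ha => ?_⟩
  · obtain ⟨a', haa', ha'⟩ := exists_between ha
    obtain ⟨r, hr, hball⟩ :=
      Metric.mem_nhdsWithin_iff.1 ((hcont ω θ₀ hθ₀).eventually (lt_mem_nhds ha'))
    filter_upwards [Ioc_mem_nhdsGT hr] with δ hδ
    exact haa'.trans_le <| le_ballInf (nonempty_inter_ball hKD hθ₀ hδ.1) fun θ hθ =>
      (hball ⟨Metric.ball_subset_ball hδ.2 hθ.2, hDK hθ.1⟩).le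
  · filter_upwards [self_mem_nhdsWithin] with δ (hδ : 0 < δ)
    exact (ballInf_le hDK hKD hcont hfG ⟨hθ₀, Metric.mem_ball_self hδ⟩ ω).trans_lt ha

variable [MeasurableSpace Ω] {μ : Measure Ω}

theorem measurable_ballInf (hD : D.Countable) (hmeas : ∀ θ, Measurable (f θ)) :
    Measurable (ballInf f D θ₀ δ) := by
  have : Countable ↥(D ∩ Metric.ball θ₀ δ) := (hD.mono Set.inter_subset_left).to_subtype
  exact Measurable.iInf fun θ => hmeas θ

theorem exists_integrable_minorant (hDK : D ⊆ K) (hD : D.Countable) (hKD : K ⊆ closure D)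
    (hcont : ∀ ω, ContinuousOn (f · ω) K) (hmeas : ∀ θ, Measurable (f θ)) (hG : Integrable G μ)
    (hfG : ∀ θ ∈ K, ∀ ω, |f θ ω| ≤ G ω) (hθ₀ : θ₀ ∈ K) {c : ℝ} (hc : c < ∫ ω, f θ₀ ω ∂μ) :
    ∃ δ > 0, ∃ ψ : Ω → ℝ, Integrable ψ μ ∧ (∀ θ ∈ K ∩ Metric.ball θ₀ δ, ∀ ω, ψ ω ≤ f θ ω) ∧
      c < ∫ ω, ψ ω ∂μ := by
  have hbound : ∀ᶠ δ in 𝓝[>] (0 : ℝ), ∀ ω, ‖ballInf f D θ₀ δ ω‖ ≤ G ω := by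
    filter_upwards [self_mem_nhdsWithin] with δ hδ
    exact abs_ballInf_le hDK hKD hcont hfG hθ₀ hδ
  have hint : Tendsto (fun δ => ∫ ω, ballInf f D θ₀ δ ω ∂μ) (𝓝[>] 0) (𝓝 (∫ ω, f θ₀ ω ∂μ)) :=
    tendsto_integral_filter_of_dominated_convergence G
      (Eventually.of_forall fun _ => (measurable_ballInf hD hmeas).aestronglyMeasurable)
      (hbound.mono fun _ h => ae_of_all _ h) hG
      (ae_of_all _ (tendsto_ballInf hDK hKD hcont hfG hθ₀))
  obtain ⟨δ, hδ, hδG, hδc⟩ :=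
    (eventually_mem_nhdsWithin.and (hbound.and (hint.eventually (lt_mem_nhds hc)))).exists
  exact ⟨δ, hδ, ballInf f D θ₀ δ, hG.mono' (measurable_ballInf hD hmeas).aestronglyMeasurable
    (ae_of_all _ hδG), fun θ hθ => ballInf_le hDK hKD hcont hfG hθ, hδc⟩

end BallInf

section Consistency

variable {Ω : Type*} [MeasurableSpace Ω] {μ : Measure Ω} {T : Ω → Ω}

theorem birkhoffAverage_mono {α : Type*} {f : α → α} {g g' : α → ℝ} (h : g ≤ g') (n : ℕ) :
    birkhoffAverage ℝ f g n ≤ birkhoffAverage ℝ f g' n := fun _ =>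
  smul_le_smul_of_nonneg_left (Finset.sum_le_sum fun _ _ => h _) (by positivity)

theorem Ergodic.tendsto_measure_exists_birkhoffAverage_le [IsProbabilityMeasure μ]
    (hT : Ergodic T μ) {E : Type*} [PseudoMetricSpace E] {K : Set E} (hK : IsCompact K)
    {f : E → Ω → ℝ} (hcont : ∀ ω, ContinuousOn (f · ω) K) (hmeas : ∀ θ, Measurable (f θ))
    {G : Ω → ℝ} (hG : Integrable G μ) (hfG : ∀ θ ∈ K, ∀ ω, |f θ ω| ≤ G ω) {c : ℝ}
    (hc : ∀ θ ∈ K, c < ∫ ω, f θ ω ∂μ) :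
    Tendsto (fun n => μ {ω | ∃ θ ∈ K, birkhoffAverage ℝ T (f θ) n ω ≤ c}) atTop (𝓝 0) := by
  obtain ⟨D, hDK, hD, hKD⟩ := hK.isSeparable.exists_countable_dense_subset
  choose! δ hδ ψ hψint hψle hψc using fun θ₀ (hθ₀ : θ₀ ∈ K) =>
    exists_integrable_minorant hDK hD hKD hcont hmeas hG hfG hθ₀ (hc θ₀ hθ₀)
  obtain ⟨t, htK, hKt⟩ := hK.elim_nhds_subcover (fun θ₀ => Metric.ball θ₀ (δ θ₀))
    fun θ₀ hθ₀ => Metric.ball_mem_nhds θ₀ (hδ θ₀ hθ₀)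
  have hsub : ∀ n, {ω | ∃ θ ∈ K, birkhoffAverage ℝ T (f θ) n ω ≤ c} ⊆
      ⋃ θ₀ ∈ t, {ω | birkhoffAverage ℝ T (ψ θ₀) n ω ≤ c} := by
    rintro n ω ⟨θ, hθK, hθc⟩
    obtain ⟨θ₀, hθ₀t, hθ⟩ := Set.mem_iUnion₂.1 (hKt hθK)
    exact Set.mem_biUnion hθ₀t <|
      (birkhoffAverage_mono (hψle θ₀ (htK θ₀ hθ₀t) θ ⟨hθK, hθ⟩) n ω).trans hθc
  have hlim : Tendsto (fun n => ∑ θ₀ ∈ t, μ {ω | birkhoffAverage ℝ T (ψ θ₀) n ω ≤ c})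
      atTop (𝓝 0) := by
    simpa using tendsto_finsetSum t fun θ₀ hθ₀ =>
      (hT.tendstoInMeasure_birkhoffAverage (hψint θ₀ (htK θ₀ hθ₀))).tendsto_measure_setOf_le
        (hψc θ₀ (htK θ₀ hθ₀))
  exact tendsto_of_tendsto_of_tendsto_of_le_of_le tendsto_const_nhds hlim (fun _ => zero_le)
    fun n => (measure_mono (hsub n)).trans (measure_biUnion_finset_le t _)

theorem tendsto_measure_of_ae_subset {ι : Type*} {l : Filter ι} {s t : ι → Set Ω}
    (ht : Tendsto (fun i => μ (t i)) l (𝓝 0)) (hst : ∀ i, s i ≤ᵐ[μ] t i) :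
    Tendsto (fun i => μ (s i)) l (𝓝 0) :=
  tendsto_of_tendsto_of_tendsto_of_le_of_le tendsto_const_nhds ht (fun _ => zero_le)
    fun i => measure_mono_ae (hst i)

theorem tendsto_measure_argmin_ne {𝒢 : Type*} [Fintype 𝒢] {Q : ℕ → 𝒢 → Ω → ℝ}
    {τhat : ℕ → Ω → 𝒢} {τ₀ : 𝒢} (hτhat : ∀ n, ∀ᵐ ω ∂μ, Q n (τhat n ω) ω ≤ Q n τ₀ ω)
    (hsep : ∀ τ ≠ τ₀, ∃ c, Tendsto (fun n => μ {ω | c ≤ Q n τ₀ ω}) atTop (𝓝 0) ∧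
      Tendsto (fun n => μ {ω | Q n τ ω ≤ c}) atTop (𝓝 0)) :
    Tendsto (fun n => μ {ω | τhat n ω ≠ τ₀}) atTop (𝓝 0) := by
  classical
  choose! c hc₀ hc using hsep
  have hsub : ∀ n, {ω | τhat n ω ≠ τ₀} ≤ᵐ[μ]
      ⋃ τ ∈ Finset.univ.erase τ₀, ({ω | c τ ≤ Q n τ₀ ω} ∪ {ω | Q n τ ω ≤ c τ}) := by
    intro n
    filter_upwards [hτhat n] with ω hω (hne : τhat n ω ≠ τ₀)
    refine Set.mem_biUnion (Finset.mem_coe.2 (Finset.mem_erase.2 ⟨hne, Finset.mem_univ _⟩)) ?_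
    by_cases h : c (τhat n ω) ≤ Q n τ₀ ω
    · exact Or.inl h
    · exact Or.inr (hω.trans (not_le.1 h).le)
  refine tendsto_measure_of_ae_subset (tendsto_of_tendsto_of_tendsto_of_le_of_le
    tendsto_const_nhds ?_ (fun _ => zero_le) fun n => (measure_biUnion_finset_le _ _).trans
      (Finset.sum_le_sum fun τ _ => measure_union_le _ _)) hsub
  simpa using tendsto_finsetSum _ fun τ hτ =>
    (hc₀ τ (Finset.ne_of_mem_erase hτ)).add (hc τ (Finset.ne_of_mem_erase hτ))

end Consistency

theorem IsCompact.abs_le_iSup_abs {X : Type*} [TopologicalSpace X] {K : Set X} (hK : IsCompact K)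
    {g : X → ℝ} (hg : ContinuousOn g K) {x : X} (hx : x ∈ K) : |g x| ≤ ⨆ y : K, |g y| :=
  le_ciSup (by simpa [Set.image_eq_range] using hK.bddAbove_image hg.abs) (⟨x, hx⟩ : K)

theorem grouped_Mestimation_assignment_consistency_general
    {Ω : Type*} [MeasurableSpace Ω] (P : Measure Ω) [IsProbabilityMeasure P]
    (T : Ω → Ω) (hT : Ergodic T P)
    {d : ℕ}
    (Θ : Set (EuclideanSpace ℝ (Fin d))) (hΘcomp : IsCompact Θ)
    {𝒢 : Type*} [Fintype 𝒢]
    (ρ : EuclideanSpace ℝ (Fin d) → 𝒢 → Ω → ℝ)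
    (hρcont : ∀ τ ω, ContinuousOn (fun θ => ρ θ τ ω) Θ)
    (hρmeas : ∀ θ τ, Measurable (fun ω => ρ θ τ ω))
    (hρint : ∀ τ, Integrable (fun ω => ⨆ θ : Θ, |ρ (θ : EuclideanSpace ℝ (Fin d)) τ ω|) P)
    -- the sample criterion
    (Sn : ℕ → EuclideanSpace ℝ (Fin d) → 𝒢 → Ω → ℝ)
    (hSn : ∀ n θ τ ω, Sn n θ τ ω = (n : ℝ)⁻¹ * ∑ t ∈ Finset.range n, ρ θ τ (T^[t] ω))
    -- the population criterion
    (S : EuclideanSpace ℝ (Fin d) → 𝒢 → ℝ)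
    (hS : ∀ θ τ, S θ τ = ∫ ω, ρ θ τ ω ∂P)
    -- (i) unique minimizers of the population criterion
    (θstar : 𝒢 → EuclideanSpace ℝ (Fin d))
    (hθstar_mem : ∀ τ, θstar τ ∈ Θ)
    (hθstar_min : ∀ τ, ∀ θ ∈ Θ, S (θstar τ) τ ≤ S θ τ)
    -- (ii) identification of the true assignment τ0
    (τ0 : 𝒢)
    (hident : ∀ θ ∈ Θ, ∀ τ : 𝒢, τ ≠ τ0 → S (θstar τ0) τ0 < S θ τ)
    -- the profile estimators
    (θtilde : ℕ → 𝒢 → Ω → EuclideanSpace ℝ (Fin d))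
    (hθtilde_min : ∀ n τ, ∀ᵐ ω ∂P, θtilde n τ ω ∈ Θ ∧
      ∀ θ ∈ Θ, Sn n (θtilde n τ ω) τ ω ≤ Sn n θ τ ω)
    -- the estimated group assignment
    (τhat : ℕ → Ω → 𝒢)
    (hτhat_min : ∀ n, ∀ᵐ ω ∂P, ∀ τ : 𝒢,
      Sn n (θtilde n (τhat n ω) ω) (τhat n ω) ω ≤ Sn n (θtilde n τ ω) τ ω) :
    Tendsto (fun n => P {ω | τhat n ω ≠ τ0}) atTop (𝓝 0) := by
  obtain rfl : Sn = fun n θ τ => birkhoffAverage ℝ T (ρ θ τ) n := by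
    funext n θ τ ω
    rw [hSn]
    rfl
  obtain rfl : S = fun θ τ => ∫ ω, ρ θ τ ω ∂P := funext₂ hS
  beta_reduce at hθtilde_min hτhat_min hθstar_min hident
  have hρG : ∀ τ, ∀ θ ∈ Θ, ∀ ω, |ρ θ τ ω| ≤ ⨆ θ' : Θ, |ρ θ' τ ω| := fun τ θ hθ ω =>
    hΘcomp.abs_le_iSup_abs (hρcont τ ω) hθ
  refine tendsto_measure_argmin_ne
    (Q := fun n τ ω => birkhoffAverage ℝ T (ρ (θtilde n τ ω) τ) n ω)
    (fun n => (hτhat_min n).mono fun ω h => h τ0) fun τ hτ => ?_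
  obtain ⟨c, hc₀, hc⟩ := exists_between (hident _ (hθstar_mem τ) τ hτ)
  refine ⟨c, ?_, ?_⟩
  · have hLLN := hT.tendstoInMeasure_birkhoffAverage ((hρint τ0).mono'
      (hρmeas _ τ0).aestronglyMeasurable (ae_of_all _ (hρG τ0 _ (hθstar_mem τ0))))
    refine tendsto_measure_of_ae_subset (hLLN.tendsto_measure_setOf_ge hc₀) fun n => ?_
    filter_upwards [hθtilde_min n τ0] with ω hω h
    exact h.trans (hω.2 _ (hθstar_mem τ0))
  · refine tendsto_measure_of_ae_subset (hT.tendsto_measure_exists_birkhoffAverage_le hΘcomp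
      (hρcont τ) (hρmeas · τ) (hρint τ) (hρG τ) fun θ hθ => hc.trans_le (hθstar_min τ θ hθ))
      fun n => ?_
    filter_upwards [hθtilde_min n τ] with ω hω h
    exact ⟨_, hω.1, h⟩

/-- In the ergodic grouped M-estimation setting, under unique minimization of
the population criterion for each group assignment and identification of the true assignment
`τ0`, the estimated group assignment is consistent: `P(τ̂ₙ ≠ τ₀) → 0`. -/
theorem grouped_Mestimation_assignment_consistency
    {Ω : Type*} [MeasurableSpace Ω] (P : Measure Ω) [IsProbabilityMeasure P]
    (T : Ω → Ω) (hT : Ergodic T P)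
    {d : ℕ} (hd : 1 ≤ d)
    (Θ : Set (EuclideanSpace ℝ (Fin d))) (hΘne : Θ.Nonempty) (hΘcomp : IsCompact Θ)
    {𝒢 : Type*} [Fintype 𝒢] [Nonempty 𝒢] [MeasurableSpace 𝒢] [MeasurableSingletonClass 𝒢]
    (ρ : EuclideanSpace ℝ (Fin d) → 𝒢 → Ω → ℝ)
    (hρcont : ∀ τ ω, ContinuousOn (fun θ => ρ θ τ ω) Θ)
    (hρmeas : ∀ θ τ, Measurable (fun ω => ρ θ τ ω))
    (hρint : ∀ τ, Integrable (fun ω => ⨆ θ : Θ, |ρ (θ : EuclideanSpace ℝ (Fin d)) τ ω|) P)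
    -- the sample criterion
    (Sn : ℕ → EuclideanSpace ℝ (Fin d) → 𝒢 → Ω → ℝ)
    (hSn : ∀ n θ τ ω, Sn n θ τ ω = (n : ℝ)⁻¹ * ∑ t ∈ Finset.range n, ρ θ τ (T^[t] ω))
    -- the population criterion
    (S : EuclideanSpace ℝ (Fin d) → 𝒢 → ℝ)
    (hS : ∀ θ τ, S θ τ = ∫ ω, ρ θ τ ω ∂P)
    -- (i) unique minimizers of the population criterion
    (θstar : 𝒢 → EuclideanSpace ℝ (Fin d))
    (hθstar_mem : ∀ τ, θstar τ ∈ Θ)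
    (hθstar_min : ∀ τ, ∀ θ ∈ Θ, S (θstar τ) τ ≤ S θ τ)
    (hθstar_uniq : ∀ τ, ∀ θ ∈ Θ, θ ≠ θstar τ → S (θstar τ) τ < S θ τ)
    -- (ii) identification of the true assignment τ0
    (τ0 : 𝒢)
    (hident : ∀ θ ∈ Θ, ∀ τ : 𝒢, τ ≠ τ0 → S (θstar τ0) τ0 < S θ τ)
    -- the profile estimators
    (θtilde : ℕ → 𝒢 → Ω → EuclideanSpace ℝ (Fin d))
    (hθtilde_meas : ∀ n τ, Measurable (fun ω => θtilde n τ ω))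
    (hθtilde_min : ∀ n τ, ∀ᵐ ω ∂P, θtilde n τ ω ∈ Θ ∧
      ∀ θ ∈ Θ, Sn n (θtilde n τ ω) τ ω ≤ Sn n θ τ ω)
    -- the estimated group assignment
    (τhat : ℕ → Ω → 𝒢)
    (hτhat_meas : ∀ n, Measurable (τhat n))
    (hτhat_min : ∀ n, ∀ᵐ ω ∂P, ∀ τ : 𝒢,
      Sn n (θtilde n (τhat n ω) ω) (τhat n ω) ω ≤ Sn n (θtilde n τ ω) τ ω) :
    Tendsto (fun n => P {ω | τhat n ω ≠ τ0}) atTop (𝓝 0) :=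
  grouped_Mestimation_assignment_consistency_general P T hT Θ hΘcomp ρ hρcont hρmeas hρint Sn hSn S
    hS θstar hθstar_mem hθstar_min τ0 hident θtilde hθtilde_min τhat hτhat_min
end

section
/- Under the ergodic grouped M-estimation setting, assume additionally that (i) for every τ ∈ 𝒢 the population criterion S(·, τ) attains a unique minimum on Θ at a point θ*(τ), and (ii) there is a distinguished element τ₀ ∈ 𝒢 such that S(θ, τ) > S(θ*(τ₀), τ₀) for every θ ∈ Θ and every τ ∈ 𝒢 with τ ≠ τ₀. Let θ̃ₙ : 𝒢 × Ω → Θ and τ̂ₙ : Ω → 𝒢 be measurable maps such that for P-almost every ω, Sₙ(θ̃ₙ(τ, ω), τ)(ω) = min_{θ∈Θ} Sₙ(θ, τ)(ω) for every τ ∈ 𝒢 and Sₙ(θ̃ₙ(τ̂ₙ(ω), ω), τ̂ₙ(ω))(ω) = min_{τ∈𝒢} Sₙ(θ̃ₙ(τ, ω), τ)(ω). Then the estimated parameter is consistent: writing θ̂ₙ(ω) = θ̃ₙ(τ̂ₙ(ω), ω) and θ₀ = θ*(τ₀), the Euclidean distance ‖θ̂ₙ − θ₀‖ converges to 0 in P-measure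 as n → ∞. -/
/-!
The Birkhoff averages of an integrable observable of an ergodic system converge in measure to its
mean: von Neumann's theorem gives this in `L²`, and since the averaging operators are
`L¹`-contractions it passes to `L¹`, in which `L²` is dense. Covering the compact parameter set by
finitely many neighbourhoods, on each of which the criterion is bounded below by one integrable
function whose mean is almost that of the criterion, upgrades this to a one-sided uniform law: with
probability tending to one, `Sₙ(θ, τ) > S(θ, τ) - η` for all `θ ∈ Θ` and all `τ`.

Compactness, continuity of `S`, uniqueness of `θ₀` and identification of `τ₀` give a margin
`η > 0` with `S(θ, τ) ≥ S(θ₀, τ₀) + η` whenever `‖θ - θ₀‖ ≥ ε`. The profile estimator satisfies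
`Sₙ(θ̂ₙ, τ̂ₙ) ≤ Sₙ(θ₀, τ₀) ≈ S(θ₀, τ₀)`, so by the uniform law it is that far from `θ₀` only on
events of vanishing probability.
-/

open MeasureTheory Filter Topology Metric Set
open scoped ENNReal

section BirkhoffAverage

variable {Ω : Type*} {T : Ω → Ω}

theorem birkhoffAverage_eq_smul_sum {R M : Type*} [DivisionSemiring R] [AddCommMonoid M]
    [Module R M] (f : Ω → M) (n : ℕ) :
    birkhoffAverage R T f n = (n : R)⁻¹ • ∑ k ∈ Finset.range n, f ∘ T^[k] := by
  ext; simp [birkhoffAverage, birkhoffSum]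

theorem birkhoffAverage_le_birkhoffAverage {f g : Ω → ℝ} (hfg : ∀ ω, f ω ≤ g ω) (n : ℕ) (ω : Ω) :
    birkhoffAverage ℝ T f n ω ≤ birkhoffAverage ℝ T g n ω := by
  unfold birkhoffAverage birkhoffSum
  gcongr with k
  exact hfg _

end BirkhoffAverage

namespace MeasureTheory

variable {Ω : Type*} [MeasurableSpace Ω] {μ : Measure Ω} {T : Ω → Ω}
  {E : Type*} [NormedAddCommGroup E]

theorem Lp.coeFn_birkhoffSum_compMeasurePreserving {p : ℝ≥0∞} (hT : MeasurePreserving T μ μ)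
    (g : Lp E p μ) (n : ℕ) :
    ⇑(birkhoffSum (Lp.compMeasurePreserving T hT) id n g) =ᵐ[μ] birkhoffSum T g n := by
  induction n with
  | zero => simpa [birkhoffSum_zero'] using Lp.coeFn_zero E p μ
  | succ n ih =>
    have hiter : ⇑((Lp.compMeasurePreserving T hT)^[n] g) =ᵐ[μ] g ∘ T^[n] := by
      rw [Lp.compMeasurePreserving_iterate]
      exact Lp.coeFn_compMeasurePreserving _ _
    rw [birkhoffSum_succ]
    filter_upwards [Lp.coeFn_add (birkhoffSum (Lp.compMeasurePreserving T hT) id n g)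
      ((Lp.compMeasurePreserving T hT)^[n] g), ih, hiter] with ω h1 h2 h3
    rw [birkhoffSum_succ, ← h2, ← Function.comp_apply (f := ⇑g), ← h3]
    exact h1

variable [NormedSpace ℝ E]

theorem Lp.coeFn_birkhoffAverage_compMeasurePreserving {p : ℝ≥0∞} (hT : MeasurePreserving T μ μ)
    (g : Lp E p μ) (n : ℕ) :
    ⇑(birkhoffAverage ℝ (Lp.compMeasurePreserving T hT) id n g) =ᵐ[μ] birkhoffAverage ℝ T g n := by
  filter_upwards [Lp.coeFn_smul (n : ℝ)⁻¹ (birkhoffSum (Lp.compMeasurePreserving T hT) id n g),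
    Lp.coeFn_birkhoffSum_compMeasurePreserving hT g n] with ω h1 h2
  simp [birkhoffAverage, h1, h2]

theorem MeasurePreserving.aestronglyMeasurable_birkhoffAverage (hT : MeasurePreserving T μ μ)
    {f : Ω → E} (hf : AEStronglyMeasurable f μ) (n : ℕ) :
    AEStronglyMeasurable (birkhoffAverage ℝ T f n) μ := by
  rw [birkhoffAverage_eq_smul_sum]
  exact (Finset.aestronglyMeasurable_sum _ fun k _ =>
    hf.comp_measurePreserving (hT.iterate k)).const_smul _

theorem MeasurePreserving.eLpNorm_birkhoffAverage_le (hT : MeasurePreserving T μ μ)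
    {p : ℝ≥0∞} (hp : 1 ≤ p) {f : Ω → E} (hf : AEStronglyMeasurable f μ) (n : ℕ) :
    eLpNorm (birkhoffAverage ℝ T f n) p μ ≤ eLpNorm f p μ := by
  rcases n.eq_zero_or_pos with rfl | hn
  · simp
  have hsum : eLpNorm (∑ k ∈ Finset.range n, f ∘ T^[k]) p μ ≤ n * eLpNorm f p μ :=
    calc _ ≤ ∑ k ∈ Finset.range n, eLpNorm (f ∘ T^[k]) p μ :=
          eLpNorm_sum_le (fun k _ => hf.comp_measurePreserving (hT.iterate k)) hp
      _ = n * eLpNorm f p μ := by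
          simp [eLpNorm_comp_measurePreserving hf (hT.iterate _)]
  rw [birkhoffAverage_eq_smul_sum, eLpNorm_const_smul]
  calc ‖(n : ℝ)⁻¹‖ₑ * _ ≤ (n : ℝ≥0∞)⁻¹ * (n * eLpNorm f p μ) := by
        rw [enorm_inv (by simp [hn.ne']), Real.enorm_natCast]
        gcongr
    _ = eLpNorm f p μ := ENNReal.inv_mul_cancel_left (by simp [hn.ne']) (by simp)

theorem MeasurePreserving.eLpNorm_birkhoffAverage_sub_integral_le [IsProbabilityMeasure μ]
    (hT : MeasurePreserving T μ μ) {f : Ω → ℝ} (hf : Integrable f μ) (n : ℕ) :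
    eLpNorm (birkhoffAverage ℝ T f n - fun _ => ∫ x, f x ∂μ) 1 μ ≤ 2 * eLpNorm f 1 μ := by
  have hconst : eLpNorm (fun _ : Ω => ∫ x, f x ∂μ) 1 μ ≤ eLpNorm f 1 μ := by
    rw [eLpNorm_const _ one_ne_zero (NeZero.ne μ), eLpNorm_one_eq_lintegral_enorm]
    simpa using enorm_integral_le_lintegral_enorm f
  calc _ ≤ eLpNorm (birkhoffAverage ℝ T f n) 1 μ + eLpNorm (fun _ => ∫ x, f x ∂μ) 1 μ :=
        eLpNorm_sub_le (hT.aestronglyMeasurable_birkhoffAverage hf.1 n)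
          aestronglyMeasurable_const le_rfl
    _ ≤ eLpNorm f 1 μ + eLpNorm f 1 μ :=
        add_le_add (hT.eLpNorm_birkhoffAverage_le le_rfl hf.1 n) hconst
    _ = 2 * eLpNorm f 1 μ := (two_mul _).symm

theorem MeasurePreserving.eLpNorm_birkhoffAverage_sub_integral_le_add [IsProbabilityMeasure μ]
    (hT : MeasurePreserving T μ μ) {f g : Ω → ℝ} (hf : Integrable f μ) (hg : Integrable g μ)
    (n : ℕ) :
    eLpNorm (birkhoffAverage ℝ T f n - fun _ => ∫ x, f x ∂μ) 1 μ ≤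
      2 * eLpNorm (f - g) 1 μ + eLpNorm (birkhoffAverage ℝ T g n - fun _ => ∫ x, g x ∂μ) 1 μ := by
  have hsplit : birkhoffAverage ℝ T f n - (fun _ => ∫ x, f x ∂μ) =
      (birkhoffAverage ℝ T (f - g) n - fun _ => ∫ x, (f - g) x ∂μ) +
        (birkhoffAverage ℝ T g n - fun _ => ∫ x, g x ∂μ) := by
    rw [birkhoffAverage_sub, integral_sub' hf hg]
    ext ω
    simp only [Pi.add_apply, Pi.sub_apply]
    ring
  rw [hsplit]
  refine (eLpNorm_add_le ?_ ?_ le_rfl).trans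
    (add_le_add_left (hT.eLpNorm_birkhoffAverage_sub_integral_le (hf.sub hg) n) _)
  · exact (hT.aestronglyMeasurable_birkhoffAverage (hf.1.sub hg.1) n).sub
      aestronglyMeasurable_const
  · exact (hT.aestronglyMeasurable_birkhoffAverage hg.1 n).sub aestronglyMeasurable_const

end MeasureTheory

namespace Ergodic

variable {Ω : Type*} [MeasurableSpace Ω] {μ : Measure Ω} {T : Ω → Ω} [IsProbabilityMeasure μ]

theorem tendsto_eLpNorm_birkhoffAverage_sub_integral_of_memLp_two
    (hT : Ergodic T μ) {f : Ω → ℝ} (hf : MemLp f 2 μ) :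
    Tendsto (fun n => eLpNorm (birkhoffAverage ℝ T f n - fun _ => ∫ x, f x ∂μ) 2 μ)
      atTop (𝓝 0) := by
  have : Fact (1 ≤ (2 : ℝ≥0∞)) := ⟨one_le_two⟩
  let U : Lp ℝ 2 μ →L[ℝ] Lp ℝ 2 μ :=
    (Lp.compMeasurePreservingₗᵢ ℝ T hT.toMeasurePreserving).toContinuousLinearMap
  let K := (U : Lp ℝ 2 μ →ₗ[ℝ] Lp ℝ 2 μ).eqLocus (1 : Lp ℝ 2 μ →L[ℝ] Lp ℝ 2 μ)
  let x := hf.toLp f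
  let y : Lp ℝ 2 μ := K.orthogonalProjectionOnto x
  have hlim : Tendsto (birkhoffAverage ℝ U id · x) atTop (𝓝 y) :=
    U.tendsto_birkhoffAverage_orthogonalProjection
      (LinearIsometry.norm_toContinuousLinearMap_le _) x
  -- `y` is `U`-invariant, hence a.e. constant by ergodicity; its value is `⟪1, y⟫ = ⟪1, x⟫ = ∫ f`
  -- because the projection is self-adjoint and fixes the invariant function `1`.
  obtain ⟨c, hc⟩ : ∃ c, ⇑y =ᵐ[μ] fun _ => c := by
    refine hT.ae_eq_const_of_ae_eq_comp_ae (Lp.aestronglyMeasurable y) ?_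
    have hy : U y = y := (K.orthogonalProjectionOnto x).2
    have hy' : Lp.compMeasurePreserving T hT.toMeasurePreserving y = y := hy
    exact (Lp.coeFn_compMeasurePreserving y hT.toMeasurePreserving).symm.trans (by rw [hy'])
  let one : Lp ℝ 2 μ := indicatorConstLp 2 MeasurableSet.univ (measure_ne_top μ _) 1
  have hone : one ∈ K := Lp.indicatorConstLp_compMeasurePreserving _ _ _ _
  have hinner (g : Lp ℝ 2 μ) : inner ℝ one g = ∫ ω, g ω ∂μ := by
    rw [L2.inner_indicatorConstLp_one, Measure.restrict_univ]
  have hcf : c = ∫ x, f x ∂μ := by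
    calc c = inner ℝ one y := by simp [hinner, integral_congr_ae hc]
      _ = inner ℝ one x := Submodule.inner_orthogonalProjectionOnto_eq_of_mem_left ⟨one, hone⟩ x
      _ = ∫ x, f x ∂μ := by rw [hinner, integral_congr_ae hf.coeFn_toLp]
  rw [Lp.tendsto_Lp_iff_tendsto_eLpNorm'] at hlim
  refine hlim.congr fun n => eLpNorm_congr_ae ?_
  filter_upwards [Lp.coeFn_birkhoffAverage_compMeasurePreserving hT.toMeasurePreserving x n,
    hT.toMeasurePreserving.quasiMeasurePreserving.birkhoffAverage_ae_eq_of_ae_eq ℝ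
      hf.coeFn_toLp n, hc] with ω h1 h2 h3
  simp only [Pi.sub_apply]
  rw [h3, ← hcf, ← h2, ← h1]
  rfl

theorem tendsto_eLpNorm_birkhoffAverage_sub_integral
    (hT : Ergodic T μ) {f : Ω → ℝ} (hf : Integrable f μ) :
    Tendsto (fun n => eLpNorm (birkhoffAverage ℝ T f n - fun _ => ∫ x, f x ∂μ) 1 μ)
      atTop (𝓝 0) := by
  refine ENNReal.tendsto_nhds_zero.2 fun ε hε => ?_
  obtain ⟨g, hfg, hg⟩ := (memLp_one_iff_integrable.2 hf).exists_simpleFunc_eLpNorm_sub_lt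
    ENNReal.one_ne_top (ENNReal.half_pos (ENNReal.half_pos hε.ne').ne').ne'
  have hg_lim : Tendsto (fun n => eLpNorm (birkhoffAverage ℝ T g n - fun _ => ∫ x, g x ∂μ) 1 μ)
      atTop (𝓝 0) :=
    tendsto_of_tendsto_of_tendsto_of_le_of_le tendsto_const_nhds
      (hT.tendsto_eLpNorm_birkhoffAverage_sub_integral_of_memLp_two
        (g.memLp_of_isFiniteMeasure 2 μ)) (fun _ => zero_le) fun n =>
      eLpNorm_le_eLpNorm_of_exponent_le one_le_two
        ((hT.toMeasurePreserving.aestronglyMeasurable_birkhoffAverage hg.1 n).sub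
          aestronglyMeasurable_const)
  filter_upwards [ENNReal.tendsto_nhds_zero.1 hg_lim (ε / 2) (ENNReal.half_pos hε.ne')]
    with n hn
  calc _ ≤ 2 * (ε / 2 / 2) + ε / 2 :=
        (hT.toMeasurePreserving.eLpNorm_birkhoffAverage_sub_integral_le_add hf
          (memLp_one_iff_integrable.1 hg) n).trans (by gcongr)
    _ = ε := by rw [ENNReal.mul_div_cancel two_ne_zero ENNReal.ofNat_ne_top, ENNReal.add_halves]

theorem tendstoInMeasure_birkhoffAverage_s1 (hT : Ergodic T μ) {f : Ω → ℝ} (hf : Integrable f μ) :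
    TendstoInMeasure μ (birkhoffAverage ℝ T f) atTop (fun _ => ∫ x, f x ∂μ) :=
  tendstoInMeasure_of_tendsto_eLpNorm one_ne_zero
    (hT.toMeasurePreserving.aestronglyMeasurable_birkhoffAverage hf.1) aestronglyMeasurable_const
    (hT.tendsto_eLpNorm_birkhoffAverage_sub_integral hf)

end Ergodic

section LowerEnvelope

variable {X : Type*}

theorem ciInf_inter_le_of_mem_closure [TopologicalSpace X] {f : X → ℝ} {U D K : Set X}
    (hU : IsOpen U) (hK : IsClosed K) (hDK : D ⊆ K) (hKD : K ⊆ closure D)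
    (hf : ContinuousOn f K) (hbdd : BddBelow (f '' D)) {x : X} (hx : x ∈ U ∩ K) :
    ⨅ y : ↥(U ∩ D), f y ≤ f x := by
  refine le_on_closure (f := fun _ => ⨅ y : ↥(U ∩ D), f y) (fun y hy => ?_) continuousOn_const
    (hf.mono (closure_minimal (inter_subset_right.trans hDK) hK))
    (hU.inter_closure ⟨hx.1, hKD hx.2⟩)
  exact ciInf_le (hbdd.mono (range_subset_iff.2 fun y : ↥(U ∩ D) => mem_image_of_mem f y.2.2))
    ⟨y, hy⟩

variable [PseudoMetricSpace X]

theorem nonempty_ball_inter_of_mem_closure {D : Set X} {x : X} (hx : x ∈ closure D) {δ : ℝ}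
    (hδ : 0 < δ) : Nonempty ↥(ball x δ ∩ D) := by
  obtain ⟨y, hyD, hxy⟩ := Metric.mem_closure_iff.1 hx δ hδ
  exact ⟨⟨y, mem_ball'.2 hxy, hyD⟩⟩

theorem tendsto_ciInf_ball_inter {f : X → ℝ} {D K : Set X} (hK : IsClosed K) (hDK : D ⊆ K)
    (hKD : K ⊆ closure D) (hf : ContinuousOn f K) (hbdd : BddBelow (f '' D)) {x : X}
    (hx : x ∈ K) :
    Tendsto (fun δ => ⨅ y : ↥(ball x δ ∩ D), f y) (𝓝[>] 0) (𝓝 (f x)) := by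
  refine Metric.tendsto_nhds.2 fun ε hε => ?_
  obtain ⟨δ₀, hδ₀, hf_close⟩ := Metric.continuousWithinAt_iff.1 (hf x hx) (ε / 2) (half_pos hε)
  filter_upwards [Ioo_mem_nhdsGT hδ₀] with δ hδ
  have := nonempty_ball_inter_of_mem_closure (hKD hx) hδ.1
  have hle : ⨅ y : ↥(ball x δ ∩ D), f y ≤ f x :=
    ciInf_inter_le_of_mem_closure isOpen_ball hK hDK hKD hf hbdd ⟨mem_ball_self hδ.1, hx⟩
  have hge : f x - ε / 2 ≤ ⨅ y : ↥(ball x δ ∩ D), f y := by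
    refine le_ciInf fun y => ?_
    have := hf_close (hDK y.2.2) ((mem_ball.1 y.2.1).trans hδ.2)
    rw [Real.dist_eq, abs_lt] at this
    linarith
  rw [Real.dist_eq, abs_lt]
  constructor <;> linarith

end LowerEnvelope

theorem continuousOn_integral_of_abs_le {Ω X : Type*} [MeasurableSpace Ω] {μ : Measure Ω}
    [TopologicalSpace X] [FirstCountableTopology X] {K : Set X} {r : X → Ω → ℝ}
    (hcont : ∀ ω, ContinuousOn (r · ω) K)
    (hmeas : ∀ θ, Measurable (r θ)) {R : Ω → ℝ} (hR : Integrable R μ)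
    (hbound : ∀ ω, ∀ θ ∈ K, |r θ ω| ≤ R ω) :
    ContinuousOn (fun θ => ∫ ω, r θ ω ∂μ) K :=
  continuousOn_of_dominated (fun θ _ => (hmeas θ).aestronglyMeasurable)
    (fun θ hθ => ae_of_all _ fun ω => (Real.norm_eq_abs _).trans_le (hbound ω θ hθ)) hR
    (ae_of_all _ hcont)

section UniformLowerDeviation

variable {Ω : Type*} [MeasurableSpace Ω] {μ : Measure Ω} {T : Ω → Ω}
  {X : Type*} [MetricSpace X] {K : Set X}

theorem IsCompact.exists_lower_bracket (hK : IsCompact K) {r : X → Ω → ℝ}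
    (hcont : ∀ ω, ContinuousOn (r · ω) K)
    (hmeas : ∀ θ, Measurable (r θ)) {R : Ω → ℝ} (hR : Integrable R μ)
    (hbound : ∀ ω, ∀ θ ∈ K, |r θ ω| ≤ R ω) {θ₀ : X} (hθ₀ : θ₀ ∈ K) {η : ℝ} (hη : 0 < η) :
    ∃ U ∈ 𝓝 θ₀, ∃ ℓ : Ω → ℝ, Integrable ℓ μ ∧
      ∀ θ ∈ U ∩ K, (∀ ω, ℓ ω ≤ r θ ω) ∧ ∫ ω, r θ ω ∂μ < ∫ ω, ℓ ω ∂μ + η := by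
  obtain ⟨D, hDK, hDc, hKD⟩ := hK.isSeparable.exists_countable_dense_subset
  have hbdd (ω : Ω) : BddBelow ((r · ω) '' D) :=
    ⟨-R ω, by rintro _ ⟨θ, hθ, rfl⟩; exact neg_le_of_abs_le (hbound ω θ (hDK hθ))⟩
  -- The infimum over the countable set `D` keeps `ℓ δ` measurable, and by continuity it is still
  -- a lower bound for `r θ` on all of `ball θ₀ δ ∩ K`.
  let ℓ (δ : ℝ) (ω : Ω) : ℝ := ⨅ θ : ↥(ball θ₀ δ ∩ D), r θ ω
  have hℓ_le {δ : ℝ} {θ : X} (hθ : θ ∈ ball θ₀ δ ∩ K) (ω : Ω) : ℓ δ ω ≤ r θ ω :=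
    ciInf_inter_le_of_mem_closure isOpen_ball hK.isClosed hDK hKD (hcont ω) (hbdd ω) hθ
  have hℓ_meas (δ : ℝ) : Measurable (ℓ δ) :=
    have := (hDc.mono (inter_subset_right (s := ball θ₀ δ))).to_subtype
    Measurable.iInf fun θ => hmeas θ
  have hℓ_bound {δ : ℝ} (hδ : 0 < δ) (ω : Ω) : ‖ℓ δ ω‖ ≤ R ω := by
    have := nonempty_ball_inter_of_mem_closure (hKD hθ₀) hδ
    rw [Real.norm_eq_abs, abs_le]
    exact ⟨le_ciInf fun θ => neg_le_of_abs_le (hbound ω θ (hDK θ.2.2)),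
      (hℓ_le ⟨mem_ball_self hδ, hθ₀⟩ ω).trans (le_of_abs_le (hbound ω θ₀ hθ₀))⟩
  have hℓ_int : Tendsto (fun δ => ∫ ω, ℓ δ ω ∂μ) (𝓝[>] 0) (𝓝 (∫ ω, r θ₀ ω ∂μ)) :=
    tendsto_integral_filter_of_dominated_convergence R
      (Eventually.of_forall fun δ => (hℓ_meas δ).aestronglyMeasurable)
      (eventually_mem_nhdsWithin.mono fun δ hδ => ae_of_all _ (hℓ_bound hδ)) hR
      (ae_of_all _ fun ω => tendsto_ciInf_ball_inter hK.isClosed hDK hKD (hcont ω) (hbdd ω) hθ₀)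
  have hS : ContinuousWithinAt (fun θ => ∫ ω, r θ ω ∂μ) K θ₀ :=
    continuousOn_integral_of_abs_le hcont hmeas hR hbound θ₀ hθ₀
  obtain ⟨V, hV, hVS⟩ := mem_nhdsWithin_iff_exists_mem_nhds_inter.1
    (hS.eventually (eventually_lt_nhds (lt_add_of_pos_right _ (half_pos hη))))
  obtain ⟨δ, hδℓ, hδ⟩ := ((hℓ_int.eventually
    (eventually_gt_nhds (sub_lt_self _ (half_pos hη)))).and self_mem_nhdsWithin).exists
  refine ⟨ball θ₀ δ ∩ V, inter_mem (ball_mem_nhds θ₀ hδ) hV, ℓ δ,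
    hR.mono' (hℓ_meas δ).aestronglyMeasurable (ae_of_all _ (hℓ_bound hδ)),
    fun θ hθ => ⟨hℓ_le ⟨hθ.1.1, hθ.2⟩, ?_⟩⟩
  have : ∫ ω, r θ ω ∂μ < ∫ ω, r θ₀ ω ∂μ + η / 2 := hVS ⟨hθ.1.2, hθ.2⟩
  linarith

theorem Ergodic.tendsto_measure_exists_birkhoffAverage_le_integral_sub [IsProbabilityMeasure μ]
    (hT : Ergodic T μ) (hK : IsCompact K) {r : X → Ω → ℝ} (hcont : ∀ ω, ContinuousOn (r · ω) K)
    (hmeas : ∀ θ, Measurable (r θ)) {R : Ω → ℝ} (hR : Integrable R μ)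
    (hbound : ∀ ω, ∀ θ ∈ K, |r θ ω| ≤ R ω) {η : ℝ} (hη : 0 < η) :
    Tendsto (fun n => μ {ω | ∃ θ ∈ K, birkhoffAverage ℝ T (r θ) n ω ≤ ∫ x, r θ x ∂μ - η})
      atTop (𝓝 0) := by
  choose! U hU ℓ hℓ_int hℓ using fun θ₀ (hθ₀ : θ₀ ∈ K) =>
    hK.exists_lower_bracket hcont hmeas hR hbound hθ₀ (half_pos hη)
  obtain ⟨t, htK, hKt⟩ := hK.elim_nhds_subcover U hU
  have hsub (n : ℕ) : {ω | ∃ θ ∈ K, birkhoffAverage ℝ T (r θ) n ω ≤ ∫ x, r θ x ∂μ - η} ⊆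
      ⋃ i ∈ t, {ω | η / 2 ≤ dist (birkhoffAverage ℝ T (ℓ i) n ω) (∫ x, ℓ i x ∂μ)} := by
    rintro ω ⟨θ, hθ, hdev⟩
    obtain ⟨i, hi, hθi⟩ := mem_iUnion₂.1 (hKt hθ)
    obtain ⟨hℓr, hint⟩ := hℓ i (htK i hi) θ ⟨hθi, hθ⟩
    have := birkhoffAverage_le_birkhoffAverage (T := T) hℓr n ω
    refine mem_biUnion hi ?_
    rw [mem_ofPred_eq, Real.dist_eq]
    linarith [neg_abs_le (birkhoffAverage ℝ T (ℓ i) n ω - ∫ x, ℓ i x ∂μ)]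
  have hlim (i : X) (hi : i ∈ t) : Tendsto
      (fun n => μ {ω | η / 2 ≤ dist (birkhoffAverage ℝ T (ℓ i) n ω) (∫ x, ℓ i x ∂μ)})
      atTop (𝓝 0) :=
    tendstoInMeasure_iff_dist.1 (hT.tendstoInMeasure_birkhoffAverage_s1 (hℓ_int i (htK i hi)))
      _ (half_pos hη)
  refine tendsto_of_tendsto_of_tendsto_of_le_of_le tendsto_const_nhds
    (by simpa using tendsto_finsetSum t hlim) (fun _ => zero_le) fun n => ?_
  exact (measure_mono (hsub n)).trans (measure_biUnion_finset_le t _)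

theorem Ergodic.tendsto_measure_exists_mem_prod_birkhoffAverage_le_integral_sub
    [IsProbabilityMeasure μ] {G : Type*} [Finite G] (hT : Ergodic T μ) (hK : IsCompact K)
    {r : X → G → Ω → ℝ} (hcont : ∀ τ ω, ContinuousOn (r · τ ω) K)
    (hmeas : ∀ θ τ, Measurable (r θ τ)) {R : G → Ω → ℝ} (hR : ∀ τ, Integrable (R τ) μ)
    (hbound : ∀ τ ω, ∀ θ ∈ K, |r θ τ ω| ≤ R τ ω) {η : ℝ} (hη : 0 < η) :
    Tendsto (fun n => μ {ω | ∃ q ∈ K ×ˢ univ,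
      birkhoffAverage ℝ T (r q.1 q.2) n ω ≤ ∫ x, r q.1 q.2 x ∂μ - η}) atTop (𝓝 0) := by
  have := Fintype.ofFinite G
  have hτ (τ : G) := hT.tendsto_measure_exists_birkhoffAverage_le_integral_sub hK (hcont τ)
    (hmeas · τ) (hR τ) (hbound τ) hη
  refine tendsto_of_tendsto_of_tendsto_of_le_of_le tendsto_const_nhds
    (by simpa using tendsto_finsetSum Finset.univ fun τ _ => hτ τ) (fun _ => zero_le)
    fun n => (measure_mono ?_).trans (measure_iUnion_fintype_le μ _)
  rintro ω ⟨⟨θ, τ⟩, ⟨hθ, -⟩, h⟩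
  exact mem_iUnion.2 ⟨τ, θ, hθ, h⟩

end UniformLowerDeviation

theorem IsCompact.le_ciSup_of_continuousOn {X : Type*} [TopologicalSpace X] {K : Set X}
    (hK : IsCompact K) {f : X → ℝ} (hf : ContinuousOn f K) {x : X} (hx : x ∈ K) :
    f x ≤ ⨆ y : K, f y :=
  le_ciSup (image_eq_range f K ▸ hK.bddAbove_image hf) ⟨x, hx⟩

theorem IsCompact.eventually_forall_add_le {X : Type*} [TopologicalSpace X] {K : Set X}
    (hK : IsCompact K) {f : X → ℝ} (hf : ContinuousOn f K) {a : ℝ} (ha : ∀ x ∈ K, a < f x) :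
    ∀ᶠ η in 𝓝 0, ∀ x ∈ K, a + η ≤ f x := by
  obtain ⟨a', ha', hfa'⟩ := hK.exists_forall_le' hf ha
  filter_upwards [eventually_lt_nhds (sub_pos.2 ha')] with η hη x hx
  linarith [hfa' x hx]

theorem exists_pos_forall_add_le_of_dist_ge {X G : Type*} [PseudoMetricSpace X] [Finite G]
    {K : Set X} (hK : IsCompact K) {S : X → G → ℝ} (hS : ∀ τ, ContinuousOn (S · τ) K)
    {θ₀ : X} {τ₀ : G} (huniq : ∀ θ ∈ K, θ ≠ θ₀ → S θ₀ τ₀ < S θ τ₀)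
    (hident : ∀ θ ∈ K, ∀ τ, τ ≠ τ₀ → S θ₀ τ₀ < S θ τ) {ε : ℝ} (hε : 0 < ε) :
    ∃ η > 0, ∀ τ, ∀ θ ∈ K, ε ≤ dist θ θ₀ → S θ₀ τ₀ + η ≤ S θ τ := by
  have hfar : ∀ᶠ η in 𝓝 0, ∀ θ ∈ K \ ball θ₀ ε, S θ₀ τ₀ + η ≤ S θ τ₀ :=
    (hK.diff isOpen_ball).eventually_forall_add_le ((hS τ₀).mono sdiff_subset) fun θ hθ =>
      huniq θ hθ.1 fun h => hθ.2 (h ▸ mem_ball_self hε)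
  have hother : ∀ᶠ η in 𝓝 0, ∀ τ, τ ≠ τ₀ → ∀ θ ∈ K, S θ₀ τ₀ + η ≤ S θ τ := by
    refine eventually_all.2 fun τ => ?_
    by_cases hτ : τ = τ₀
    · exact Eventually.of_forall fun _ h => (h hτ).elim
    · exact (hK.eventually_forall_add_le (hS τ) fun θ hθ => hident θ hθ τ hτ).mono
        fun _ h _ => h
  obtain ⟨η, ⟨hη_far, hη_other⟩, hη⟩ := (((hfar.and hother).filter_mono nhdsWithin_le_nhds).and
    (self_mem_nhdsWithin (s := Ioi 0))).exists
  refine ⟨η, hη, fun τ θ hθ hdist => ?_⟩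
  rcases eq_or_ne τ τ₀ with rfl | hτ
  · exact hη_far θ ⟨hθ, not_lt.2 hdist⟩
  · exact hη_other τ hτ θ hθ

theorem tendsto_measure_notMem_of_forall_add_le {Ω ι : Type*} [MeasurableSpace Ω]
    {μ : Measure Ω} {A V : Set ι} {p₀ : ι} {F : ι → ℝ} {Fn : ℕ → ι → Ω → ℝ} {p : ℕ → Ω → ι}
    {η : ℝ} (hη : 0 < η) (hsep : ∀ q ∈ A, q ∉ V → F p₀ + η ≤ F q)
    (hp : ∀ n, ∀ᵐ ω ∂μ, p n ω ∈ A ∧ Fn n (p n ω) ω ≤ Fn n p₀ ω)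
    (hlower : Tendsto (fun n => μ {ω | ∃ q ∈ A, Fn n q ω ≤ F q - η / 2}) atTop (𝓝 0))
    (hp₀ : TendstoInMeasure μ (fun n => Fn n p₀) atTop fun _ => F p₀) :
    Tendsto (fun n => μ {ω | p n ω ∉ V}) atTop (𝓝 0) := by
  have hsub (n : ℕ) : {ω | p n ω ∉ V} ≤ᵐ[μ] ({ω | ∃ q ∈ A, Fn n q ω ≤ F q - η / 2} ∪
      {ω | η / 2 ≤ dist (Fn n p₀ ω) (F p₀)} : Set Ω) := by
    filter_upwards [hp n] with ω ⟨hpA, hpmin⟩ hpV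
    by_cases hlow : Fn n (p n ω) ω ≤ F (p n ω) - η / 2
    · exact Or.inl ⟨p n ω, hpA, hlow⟩
    · have : η / 2 ≤ dist (Fn n p₀ ω) (F p₀) := by
        rw [Real.dist_eq]
        linarith [hsep _ hpA hpV, le_abs_self (Fn n p₀ ω - F p₀)]
      exact Or.inr this
  refine tendsto_of_tendsto_of_tendsto_of_le_of_le tendsto_const_nhds
    (by simpa using hlower.add (tendstoInMeasure_iff_dist.1 hp₀ _ (half_pos hη)))
    (fun _ => zero_le) fun n => ?_
  exact (measure_mono_ae (hsub n)).trans (measure_union_le _ _)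

theorem grouped_Mestimation_parameter_consistency_general
    {Ω : Type*} [MeasurableSpace Ω] (P : Measure Ω) [IsProbabilityMeasure P]
    (T : Ω → Ω) (hT : Ergodic T P)
    {d : ℕ}
    (Θ : Set (EuclideanSpace ℝ (Fin d))) (hΘcomp : IsCompact Θ)
    {𝒢 : Type*} [Fintype 𝒢]
    (ρ : EuclideanSpace ℝ (Fin d) → 𝒢 → Ω → ℝ)
    (hρcont : ∀ τ ω, ContinuousOn (fun θ => ρ θ τ ω) Θ)
    (hρmeas : ∀ θ τ, Measurable (fun ω => ρ θ τ ω))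
    (hρint : ∀ τ, Integrable (fun ω => ⨆ θ : Θ, |ρ (θ : EuclideanSpace ℝ (Fin d)) τ ω|) P)
    -- the sample criterion
    (Sn : ℕ → EuclideanSpace ℝ (Fin d) → 𝒢 → Ω → ℝ)
    (hSn : ∀ n θ τ ω, Sn n θ τ ω = (n : ℝ)⁻¹ * ∑ t ∈ Finset.range n, ρ θ τ (T^[t] ω))
    -- the population criterion
    (S : EuclideanSpace ℝ (Fin d) → 𝒢 → ℝ)
    (hS : ∀ θ τ, S θ τ = ∫ ω, ρ θ τ ω ∂P)
    -- (i) unique minimizers of the population criterion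
    (θstar : 𝒢 → EuclideanSpace ℝ (Fin d))
    (hθstar_mem : ∀ τ, θstar τ ∈ Θ)
    (hθstar_uniq : ∀ τ, ∀ θ ∈ Θ, θ ≠ θstar τ → S (θstar τ) τ < S θ τ)
    -- (ii) identification of the true assignment τ0
    (τ0 : 𝒢)
    (hident : ∀ θ ∈ Θ, ∀ τ : 𝒢, τ ≠ τ0 → S (θstar τ0) τ0 < S θ τ)
    -- the profile estimators
    (θtilde : ℕ → 𝒢 → Ω → EuclideanSpace ℝ (Fin d))
    (hθtilde_min : ∀ n τ, ∀ᵐ ω ∂P, θtilde n τ ω ∈ Θ ∧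
      ∀ θ ∈ Θ, Sn n (θtilde n τ ω) τ ω ≤ Sn n θ τ ω)
    -- the estimated group assignment
    (τhat : ℕ → Ω → 𝒢)
    (hτhat_min : ∀ n, ∀ᵐ ω ∂P, ∀ τ : 𝒢,
      Sn n (θtilde n (τhat n ω) ω) (τhat n ω) ω ≤ Sn n (θtilde n τ ω) τ ω) :
    TendstoInMeasure P (fun n ω => θtilde n (τhat n ω) ω) atTop (fun _ => θstar τ0) := by
  set θ₀ := θstar τ0
  have hSn' (n θ τ) : Sn n θ τ = birkhoffAverage ℝ T (ρ θ τ) n :=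
    funext fun ω => by simp [hSn, birkhoffAverage, birkhoffSum]
  have hbound (τ ω) : ∀ θ ∈ Θ, |ρ θ τ ω| ≤ ⨆ θ : Θ, |ρ θ τ ω| := fun θ hθ =>
    hΘcomp.le_ciSup_of_continuousOn (hρcont τ ω).abs hθ
  have hScont (τ) : ContinuousOn (S · τ) Θ := by
    simpa only [hS] using continuousOn_integral_of_abs_le (hρcont τ) (hρmeas · τ) (hρint τ)
      (hbound τ)
  refine tendstoInMeasure_iff_dist.2 fun ε hε => ?_
  obtain ⟨η, hη, hsep⟩ := exists_pos_forall_add_le_of_dist_ge hΘcomp hScont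
    (hθstar_uniq τ0) hident hε
  have hlower : Tendsto
      (fun n => P {ω | ∃ q ∈ Θ ×ˢ univ, Sn n q.1 q.2 ω ≤ S q.1 q.2 - η / 2}) atTop (𝓝 0) := by
    simpa only [hSn', hS] using
      hT.tendsto_measure_exists_mem_prod_birkhoffAverage_le_integral_sub hΘcomp hρcont hρmeas
        hρint hbound (half_pos hη)
  have hupper : TendstoInMeasure P (fun n => Sn n θ₀ τ0) atTop fun _ => S θ₀ τ0 := by
    simpa only [hSn', hS] using hT.tendstoInMeasure_birkhoffAverage_s1 <| (hρint τ0).mono'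
      (hρmeas θ₀ τ0).aestronglyMeasurable
      (ae_of_all _ fun ω => (Real.norm_eq_abs _).trans_le (hbound τ0 ω θ₀ (hθstar_mem τ0)))
  have hmin (n : ℕ) : ∀ᵐ ω ∂P, (θtilde n (τhat n ω) ω, τhat n ω) ∈ Θ ×ˢ univ ∧
      Sn n (θtilde n (τhat n ω) ω) (τhat n ω) ω ≤ Sn n θ₀ τ0 ω := by
    filter_upwards [ae_all_iff.2 (hθtilde_min n), hτhat_min n] with ω hθ hτ
    exact ⟨⟨(hθ _).1, mem_univ _⟩, (hτ τ0).trans ((hθ τ0).2 θ₀ (hθstar_mem τ0))⟩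
  have := tendsto_measure_notMem_of_forall_add_le (A := Θ ×ˢ univ) (p₀ := (θ₀, τ0))
    (V := {q | dist q.1 θ₀ < ε}) (F := fun q => S q.1 q.2) (Fn := fun n q => Sn n q.1 q.2)
    (p := fun n ω => (θtilde n (τhat n ω) ω, τhat n ω)) hη
    (fun q hq hqV => hsep q.2 q.1 hq.1 (not_lt.1 hqV)) hmin hlower hupper
  simpa only [mem_ofPred_eq, not_lt] using this

/-- In the ergodic grouped M-estimation setting, under unique minimization and identification, the estimated parameter θ̂ₙ(ω) = θ̃ₙ(τ̂ₙ(ω), ω) converges in P-measure to θ₀ = θ*(τ₀). -/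
theorem grouped_Mestimation_parameter_consistency
    {Ω : Type*} [MeasurableSpace Ω] (P : Measure Ω) [IsProbabilityMeasure P]
    (T : Ω → Ω) (hT : Ergodic T P)
    {d : ℕ} (hd : 1 ≤ d)
    (Θ : Set (EuclideanSpace ℝ (Fin d))) (hΘne : Θ.Nonempty) (hΘcomp : IsCompact Θ)
    {𝒢 : Type*} [Fintype 𝒢] [Nonempty 𝒢] [MeasurableSpace 𝒢] [MeasurableSingletonClass 𝒢]
    (ρ : EuclideanSpace ℝ (Fin d) → 𝒢 → Ω → ℝ)
    (hρcont : ∀ τ ω, ContinuousOn (fun θ => ρ θ τ ω) Θ)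
    (hρmeas : ∀ θ τ, Measurable (fun ω => ρ θ τ ω))
    (hρint : ∀ τ, Integrable (fun ω => ⨆ θ : Θ, |ρ (θ : EuclideanSpace ℝ (Fin d)) τ ω|) P)
    -- the sample criterion
    (Sn : ℕ → EuclideanSpace ℝ (Fin d) → 𝒢 → Ω → ℝ)
    (hSn : ∀ n θ τ ω, Sn n θ τ ω = (n : ℝ)⁻¹ * ∑ t ∈ Finset.range n, ρ θ τ (T^[t] ω))
    -- the population criterion
    (S : EuclideanSpace ℝ (Fin d) → 𝒢 → ℝ)
    (hS : ∀ θ τ, S θ τ = ∫ ω, ρ θ τ ω ∂P)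
    -- (i) unique minimizers of the population criterion
    (θstar : 𝒢 → EuclideanSpace ℝ (Fin d))
    (hθstar_mem : ∀ τ, θstar τ ∈ Θ)
    (hθstar_min : ∀ τ, ∀ θ ∈ Θ, S (θstar τ) τ ≤ S θ τ)
    (hθstar_uniq : ∀ τ, ∀ θ ∈ Θ, θ ≠ θstar τ → S (θstar τ) τ < S θ τ)
    -- (ii) identification of the true assignment τ0
    (τ0 : 𝒢)
    (hident : ∀ θ ∈ Θ, ∀ τ : 𝒢, τ ≠ τ0 → S (θstar τ0) τ0 < S θ τ)
    -- the profile estimators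
    (θtilde : ℕ → 𝒢 → Ω → EuclideanSpace ℝ (Fin d))
    (hθtilde_meas : ∀ n τ, Measurable (fun ω => θtilde n τ ω))
    (hθtilde_min : ∀ n τ, ∀ᵐ ω ∂P, θtilde n τ ω ∈ Θ ∧
      ∀ θ ∈ Θ, Sn n (θtilde n τ ω) τ ω ≤ Sn n θ τ ω)
    -- the estimated group assignment
    (τhat : ℕ → Ω → 𝒢)
    (hτhat_meas : ∀ n, Measurable (τhat n))
    (hτhat_min : ∀ n, ∀ᵐ ω ∂P, ∀ τ : 𝒢,
      Sn n (θtilde n (τhat n ω) ω) (τhat n ω) ω ≤ Sn n (θtilde n τ ω) τ ω) :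
    TendstoInMeasure P (fun n ω => θtilde n (τhat n ω) ω) atTop (fun _ => θstar τ0) :=
  grouped_Mestimation_parameter_consistency_general P T hT Θ hΘcomp ρ hρcont hρmeas hρint Sn hSn S
    hS θstar hθstar_mem hθstar_uniq τ0 hident θtilde hθtilde_min τhat hτhat_min
end

section
/- Consistency of M-estimators under uniform convergence in probability: Let (Ω, 𝒜, P) be a probability space, d ≥ 1, Θ ⊆ ℝ^d a nonempty compact set, and Q : Θ → ℝ a continuous function attaining a unique minimum on Θ at θ*. Let Qₙ : Θ × Ω → ℝ be such that θ ↦ Qₙ(θ, ω) is continuous on Θ for every ω, ω ↦ Qₙ(θ, ω) is measurable for every θ, and the real random variables ω ↦ sup_{θ∈Θ} |Qₙ(θ, ω) − Q(θ)| converge to 0 in P-measure as n → ∞. Then any sequence of measurable maps θ̂ₙ : Ω → Θ satisfying Qₙ(θ̂ₙ(ω), ω) = min_{θ∈Θ} Qₙ(θ, ω) for P-almost every ω satisfies that ‖θ̂ₙ − θ*‖ converges to 0 in P-measure as n → ∞. -/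
/-!
The minimum of `Q` on the compact set `Θ` is well separated: away from an `ε`-ball around `θstar`,
`Q` exceeds `Q θstar` by some `δ > 0`. A minimizer `θ̂ₙ` of `Qₙ` satisfies
`Q θ̂ₙ ≤ Qₙ θ̂ₙ + Dₙ ≤ Qₙ θstar + Dₙ ≤ Q θstar + 2 Dₙ`, where `Dₙ` is the uniform deviation
`sup_Θ |Qₙ - Q|`, so `‖θ̂ₙ - θstar‖ ≥ ε` forces `Dₙ ≥ δ / 2`, an event whose probability tends to `0`.
-/

open MeasureTheory Filter Topology

theorem IsCompact.exists_pos_forall_add_le_of_le_dist {α : Type*} [PseudoMetricSpace α]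
    {s : Set α} (hs : IsCompact s) {f : α → ℝ} (hf : ContinuousOn f s) {x₀ : α}
    (hmin : ∀ x ∈ s, x ≠ x₀ → f x₀ < f x) {ε : ℝ} (hε : 0 < ε) :
    ∃ δ > 0, ∀ x ∈ s, ε ≤ dist x x₀ → f x₀ + δ ≤ f x := by
  set K := s ∩ {x | ε ≤ dist x x₀}
  have hK : IsCompact K :=
    hs.inter_right (isClosed_le continuous_const (continuous_id.dist continuous_const))
  rcases K.eq_empty_or_nonempty with hKe | hKne
  · refine ⟨1, one_pos, fun x hx hfar => ?_⟩
    have hxK : x ∈ K := ⟨hx, hfar⟩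
    simp [hKe] at hxK
  obtain ⟨x₁, ⟨hx₁s, hx₁far⟩, hx₁min⟩ := hK.exists_isMinOn hKne (hf.mono Set.inter_subset_left)
  have hx₁ne : x₁ ≠ x₀ := by
    rintro rfl
    simp only [Set.mem_ofPred_eq, dist_self] at hx₁far
    linarith
  exact ⟨f x₁ - f x₀, sub_pos.mpr (hmin x₁ hx₁s hx₁ne), fun x hx hfar => by
    linarith [show f x₁ ≤ f x from hx₁min ⟨hx, hfar⟩]⟩

theorem IsCompact.abs_sub_le_iSup_abs_sub {α : Type*} [TopologicalSpace α] {s : Set α}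
    (hs : IsCompact s) {f g : α → ℝ} (hf : ContinuousOn f s) (hg : ContinuousOn g s)
    {x : α} (hx : x ∈ s) : |f x - g x| ≤ ⨆ y : s, |f y - g y| := by
  have hbdd := hs.bddAbove_image (hf.sub hg).abs
  rw [Set.image_eq_range] at hbdd
  exact le_ciSup (f := fun y : s => |f y - g y|) hbdd ⟨x, hx⟩

theorem MeasureTheory.tendstoInMeasure_of_forall_ae_le_of_le_dist {Ω E : Type*}
    [MeasurableSpace Ω] [PseudoMetricSpace E] {μ : Measure Ω} {f : ℕ → Ω → E} {g : Ω → E}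
    {D : ℕ → Ω → ℝ} (hD : TendstoInMeasure μ D atTop (fun _ => 0))
    (h : ∀ ε > 0, ∃ δ > 0, ∀ n, ∀ᵐ ω ∂μ, ε ≤ dist (f n ω) (g ω) → δ ≤ D n ω) :
    TendstoInMeasure μ f atTop g := by
  rw [tendstoInMeasure_iff_dist] at hD ⊢
  intro ε hε
  obtain ⟨δ, hδ, hfD⟩ := h ε hε
  refine tendsto_of_tendsto_of_tendsto_of_le_of_le tendsto_const_nhds (hD δ hδ)
    (fun _ => zero_le) fun n => measure_mono_ae ?_
  filter_upwards [hfD n] with ω hω hfar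
  show δ ≤ dist (D n ω) 0
  rw [Real.dist_eq, sub_zero]
  exact (hω hfar).trans (le_abs_self _)

theorem Mestimator_consistency_uniform_convergence_general
    {Ω : Type*} [MeasurableSpace Ω] (P : Measure Ω) [IsProbabilityMeasure P]
    {d : ℕ}
    (Θ : Set (EuclideanSpace ℝ (Fin d))) (hΘcomp : IsCompact Θ)
    (Q : EuclideanSpace ℝ (Fin d) → ℝ) (hQcont : ContinuousOn Q Θ)
    (θstar : EuclideanSpace ℝ (Fin d))
    (hθstar_mem : θstar ∈ Θ)
    (hθstar_uniq : ∀ θ ∈ Θ, θ ≠ θstar → Q θstar < Q θ)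
    (Qn : ℕ → EuclideanSpace ℝ (Fin d) → Ω → ℝ)
    (hQncont : ∀ n ω, ContinuousOn (fun θ => Qn n θ ω) Θ)
    (hQnconv : TendstoInMeasure P
      (fun (n : ℕ) ω => ⨆ θ : Θ, |Qn n (θ : EuclideanSpace ℝ (Fin d)) ω
        - Q (θ : EuclideanSpace ℝ (Fin d))|) atTop (fun _ => 0))
    (θhat : ℕ → Ω → EuclideanSpace ℝ (Fin d))
    (hθhat_min : ∀ n, ∀ᵐ ω ∂P, θhat n ω ∈ Θ ∧
      ∀ θ ∈ Θ, Qn n (θhat n ω) ω ≤ Qn n θ ω) :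
    TendstoInMeasure P (fun n ω => θhat n ω) atTop (fun _ => θstar) := by
  refine tendstoInMeasure_of_forall_ae_le_of_le_dist hQnconv fun ε hε => ?_
  obtain ⟨δ, hδ, hsep⟩ := hΘcomp.exists_pos_forall_add_le_of_le_dist hQcont hθstar_uniq hε
  refine ⟨δ / 2, half_pos hδ, fun n => ?_⟩
  filter_upwards [hθhat_min n] with ω ⟨hmem, hmin⟩ hfar
  have hdev {θ} (hθ : θ ∈ Θ) := abs_le.mp (hΘcomp.abs_sub_le_iSup_abs_sub (hQncont n ω) hQcont hθ)
  linarith [hsep _ hmem hfar, hmin θstar hθstar_mem, hdev hmem, hdev hθstar_mem]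

/-- Consistency of M-estimators under uniform convergence in probability:
if the sample criteria `Qₙ` converge uniformly on the compact set `Θ` in P-measure to a
continuous population criterion `Q` with unique minimizer `θstar`, then any sequence of
measurable minimizers of `Qₙ` over `Θ` converges to `θstar` in P-measure. -/
theorem Mestimator_consistency_uniform_convergence
    {Ω : Type*} [MeasurableSpace Ω] (P : Measure Ω) [IsProbabilityMeasure P]
    {d : ℕ} (hd : 1 ≤ d)
    (Θ : Set (EuclideanSpace ℝ (Fin d))) (hΘne : Θ.Nonempty) (hΘcomp : IsCompact Θ)
    (Q : EuclideanSpace ℝ (Fin d) → ℝ) (hQcont : ContinuousOn Q Θ)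
    (θstar : EuclideanSpace ℝ (Fin d))
    (hθstar_mem : θstar ∈ Θ)
    (hθstar_min : ∀ θ ∈ Θ, Q θstar ≤ Q θ)
    (hθstar_uniq : ∀ θ ∈ Θ, θ ≠ θstar → Q θstar < Q θ)
    (Qn : ℕ → EuclideanSpace ℝ (Fin d) → Ω → ℝ)
    (hQncont : ∀ n ω, ContinuousOn (fun θ => Qn n θ ω) Θ)
    (hQnmeas : ∀ n θ, Measurable (fun ω => Qn n θ ω))
    (hQnconv : TendstoInMeasure P
      (fun (n : ℕ) ω => ⨆ θ : Θ, |Qn n (θ : EuclideanSpace ℝ (Fin d)) ω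
        - Q (θ : EuclideanSpace ℝ (Fin d))|) atTop (fun _ => 0))
    (θhat : ℕ → Ω → EuclideanSpace ℝ (Fin d))
    (hθhat_meas : ∀ n, Measurable (θhat n))
    (hθhat_min : ∀ n, ∀ᵐ ω ∂P, θhat n ω ∈ Θ ∧
      ∀ θ ∈ Θ, Qn n (θhat n ω) ω ≤ Qn n θ ω) :
    TendstoInMeasure P (fun n ω => θhat n ω) atTop (fun _ => θstar) :=
  Mestimator_consistency_uniform_convergence_general P Θ hΘcomp Q hQcont θstar hθstar_mem
    hθstar_uniq Qn hQncont hQnconv θhat hθhat_min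
end

section
/- Joint consistency of grouped M-estimators under uniform convergence (deterministic skeleton of the EM consistency theorem): Let (Ω, 𝒜, P) be a probability space, d ≥ 1, Θ ⊆ ℝ^d a nonempty compact set, and 𝒢 a nonempty finite set. Let Q : Θ × 𝒢 → ℝ be continuous in its first argument, assume that for every τ ∈ 𝒢 the function Q(·, τ) attains a unique minimum on Θ at θ*(τ), and that there is τ₀ ∈ 𝒢 with Q(θ, τ) > Q(θ*(τ₀), τ₀) for every θ ∈ Θ and every τ ≠ τ₀. For each n let Qₙ : Θ × 𝒢 × Ω → ℝ be continuous in θ for every (τ, ω), measurable in ω for every (θ, τ), and assume that for every τ ∈ 𝒢 the random variables sup_{θ∈Θ} |Qₙ(θ, τ, ·) − Q(θ, τ)| converge to 0 in P-measure. Then any measurable maps θ̃ₙ : 𝒢 × Ω → Θ with Qₙ(θ̃ₙ(τ, ω), τ, ω) = min_{θ∈Θ} Qₙ(θ, τ, ω) and τ̂ₙ : Ω → 𝒢 with Qₙ(θ̃ₙ(τ̂ₙ(ω), ω), τ̂ₙ(ω), ω) = min_{τ∈𝒢} Qₙ(θ̃ₙ(τ, ω), τ, ω) (both for P-almost every ω)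 satisfy: P(τ̂ₙ ≠ τ₀) → 0 and ‖θ̃ₙ(τ̂ₙ(·), ·) − θ*(τ₀)‖ converges to 0 in P-measure as n → ∞. -/
open MeasureTheory Filter Topology

/-!
On the event where every `Qₙ(·, τ)` is uniformly `η`-close to `Q(·, τ)` on `Θ`, the two-stage
minimiser `(θ̃ₙ(τ̂ₙ), τ̂ₙ)` has population criterion within `2η` of `Q(θ*(τ₀), τ₀)`. By compactness,
continuity, uniqueness of `θ*(τ₀)` and identification of `τ₀`, every pair `(θ, τ)` with `τ ≠ τ₀` or
`‖θ - θ*(τ₀)‖ ≥ ε` has criterion at least `Q(θ*(τ₀), τ₀) + 3η` for some `η > 0` (finitely many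
groups). So the bad events lie, up to null sets, in the union over the finitely many `τ` of
`{sup_θ |Qₙ - Q| ≥ η}`, whose probabilities tend to `0`.
-/

theorem IsCompact.le_iSup_of_continuousOn {X α : Type*} [TopologicalSpace X]
    [ConditionallyCompleteLinearOrder α] [TopologicalSpace α] [ClosedIciTopology α]
    {s : Set X} (hs : IsCompact s) {f : X → α} (hf : ContinuousOn f s) {x : X} (hx : x ∈ s) :
    f x ≤ ⨆ y : s, f y :=
  le_ciSup (f := fun y : s => f y)
    (by simpa only [Set.image_eq_range] using hs.bddAbove_image hf) ⟨x, hx⟩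

theorem exists_gt_forall_le_of_finite_of_isCompact {ι X α : Type*} [Finite ι] [TopologicalSpace X]
    [LinearOrder α] [TopologicalSpace α] [OrderTopology α] [DenselyOrdered α] [NoMaxOrder α]
    {K : ι → Set X} (hK : ∀ i, IsCompact (K i)) {f : ι → X → α} (hf : ∀ i, ContinuousOn (f i) (K i))
    {c : α} (hc : ∀ i, ∀ x ∈ K i, c < f i x) : ∃ a > c, ∀ i, ∀ x ∈ K i, a ≤ f i x := by
  have h : ∀ i, ∀ᶠ a in 𝓝[>] c, ∀ x ∈ K i, a ≤ f i x := fun i => by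
    obtain ⟨a, hca, ha⟩ := (hK i).exists_forall_le' (hf i) (hc i)
    filter_upwards [Ioc_mem_nhdsGT hca] with b hb x hx using hb.2.trans (ha x hx)
  obtain ⟨a, ha, hca⟩ := ((eventually_all.2 h).and self_mem_nhdsWithin).exists
  exact ⟨a, hca, ha⟩

theorem exists_gt_forall_le_away_from_strict_min {X ι : Type*} [PseudoMetricSpace X] [Finite ι]
    {Θ : Set X} (hΘ : IsCompact Θ) {Q : X → ι → ℝ} (hQ : ∀ τ, ContinuousOn (fun θ => Q θ τ) Θ)
    {θ₀ : X} {τ₀ : ι} (huniq : ∀ θ ∈ Θ, θ ≠ θ₀ → Q θ₀ τ₀ < Q θ τ₀)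
    (hident : ∀ θ ∈ Θ, ∀ τ, τ ≠ τ₀ → Q θ₀ τ₀ < Q θ τ) {ε : ℝ} (hε : 0 < ε) :
    ∃ a > Q θ₀ τ₀, ∀ θ ∈ Θ, ∀ τ, ¬(τ = τ₀ ∧ dist θ θ₀ < ε) → a ≤ Q θ τ := by
  let K : ι → Set X := fun τ => Θ ∩ {θ | ¬(τ = τ₀ ∧ dist θ θ₀ < ε)}
  have hK : ∀ τ, IsCompact (K τ) := fun τ =>
    hΘ.inter_right (isOpen_const.and (isOpen_lt (continuous_id.dist continuous_const)
      continuous_const)).isClosed_compl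
  have hgap : ∀ τ, ∀ θ ∈ K τ, Q θ₀ τ₀ < Q θ τ := by
    rintro τ θ ⟨hθ, hfar⟩
    by_cases hτ : τ = τ₀
    · subst hτ
      refine huniq θ hθ fun hθ₀ => hfar ⟨rfl, ?_⟩
      rwa [hθ₀, dist_self]
    · exact hident θ hθ τ hτ
  obtain ⟨a, hca, ha⟩ := exists_gt_forall_le_of_finite_of_isCompact hK
    (fun τ => (hQ τ).mono Set.inter_subset_left) hgap
  exact ⟨a, hca, fun θ hθ τ hfar => ha τ θ ⟨hθ, hfar⟩⟩

theorem twoStage_argmin_le_add {X ι : Type*} {Θ : Set X} {Q q : X → ι → ℝ} {η : ℝ}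
    (happrox : ∀ τ, ∀ θ ∈ Θ, |q θ τ - Q θ τ| ≤ η) {θt : ι → X}
    (hθt : ∀ τ, θt τ ∈ Θ ∧ ∀ θ ∈ Θ, q (θt τ) τ ≤ q θ τ) {τh : ι}
    (hτh : ∀ τ, q (θt τh) τh ≤ q (θt τ) τ) (τ : ι) (θ : X) (hθ : θ ∈ Θ) :
    Q (θt τh) τh ≤ Q θ τ + 2 * η := by
  have h₁ := abs_le.1 (happrox τh _ (hθt τh).1)
  have h₂ := abs_le.1 (happrox τ θ hθ)
  linarith [hτh τ, (hθt τ).2 θ hθ]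

theorem tendsto_measure_of_ae_imp_of_tendstoInMeasure {Ω α ι E : Type*} [MeasurableSpace Ω]
    {μ : Measure Ω} [Fintype ι] [PseudoMetricSpace E] {l : Filter α} {f : ι → α → Ω → E}
    {g : ι → Ω → E} (hf : ∀ i, TendstoInMeasure μ (f i) l (g i)) {ε : ℝ} (hε : 0 < ε)
    {s : α → Set Ω} (hs : ∀ n, ∀ᵐ ω ∂μ, (∀ i, dist (f i n ω) (g i ω) < ε) → ω ∉ s n) :
    Tendsto (fun n => μ (s n)) l (𝓝 0) := by
  have hsum : Tendsto (fun n => ∑ i, μ {ω | ε ≤ dist (f i n ω) (g i ω)}) l (𝓝 0) := by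
    simpa only [Finset.sum_const_zero] using
      tendsto_finsetSum Finset.univ fun i _ => tendstoInMeasure_iff_dist.1 (hf i) ε hε
  refine tendsto_of_tendsto_of_tendsto_of_le_of_le tendsto_const_nhds hsum (fun _ => zero_le)
    fun n => ?_
  calc μ (s n) ≤ μ (⋃ i, {ω | ε ≤ dist (f i n ω) (g i ω)}) := measure_mono_ae <| by
        filter_upwards [hs n] with ω hω hωs
        by_contra hsmall
        exact hω (fun i => not_le.1 fun hi => hsmall (Set.mem_iUnion.2 ⟨i, hi⟩)) hωs
    _ ≤ ∑ i, μ {ω | ε ≤ dist (f i n ω) (g i ω)} := measure_iUnion_fintype_le _ _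

theorem grouped_Mestimation_joint_consistency_general
    {Ω : Type*} [MeasurableSpace Ω] (P : Measure Ω)
    {d : ℕ}
    (Θ : Set (EuclideanSpace ℝ (Fin d))) (hΘcomp : IsCompact Θ)
    {𝒢 : Type*} [Fintype 𝒢]
    (Q : EuclideanSpace ℝ (Fin d) → 𝒢 → ℝ)
    (hQcont : ∀ τ, ContinuousOn (fun θ => Q θ τ) Θ)
    (θstar : 𝒢 → EuclideanSpace ℝ (Fin d))
    (hθstar_mem : ∀ τ, θstar τ ∈ Θ)
    (hθstar_uniq : ∀ τ, ∀ θ ∈ Θ, θ ≠ θstar τ → Q (θstar τ) τ < Q θ τ)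
    (τ0 : 𝒢)
    (hident : ∀ θ ∈ Θ, ∀ τ : 𝒢, τ ≠ τ0 → Q (θstar τ0) τ0 < Q θ τ)
    (Qn : ℕ → EuclideanSpace ℝ (Fin d) → 𝒢 → Ω → ℝ)
    (hQncont : ∀ n τ ω, ContinuousOn (fun θ => Qn n θ τ ω) Θ)
    (hQnconv : ∀ τ : 𝒢, TendstoInMeasure P
      (fun (n : ℕ) ω => ⨆ θ : Θ, |Qn n (θ : EuclideanSpace ℝ (Fin d)) τ ω
        - Q (θ : EuclideanSpace ℝ (Fin d)) τ|) atTop (fun _ => 0))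
    (θtilde : ℕ → 𝒢 → Ω → EuclideanSpace ℝ (Fin d))
    (hθtilde_min : ∀ n τ, ∀ᵐ ω ∂P, θtilde n τ ω ∈ Θ ∧
      ∀ θ ∈ Θ, Qn n (θtilde n τ ω) τ ω ≤ Qn n θ τ ω)
    (τhat : ℕ → Ω → 𝒢)
    (hτhat_min : ∀ n, ∀ᵐ ω ∂P, ∀ τ : 𝒢,
      Qn n (θtilde n (τhat n ω) ω) (τhat n ω) ω ≤ Qn n (θtilde n τ ω) τ ω) :
    Tendsto (fun n => P {ω | τhat n ω ≠ τ0}) atTop (𝓝 0) ∧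
    TendstoInMeasure P (fun n ω => θtilde n (τhat n ω) ω) atTop (fun _ => θstar τ0) := by
  set D : 𝒢 → ℕ → Ω → ℝ := fun τ n ω => ⨆ θ : Θ, |Qn n θ τ ω - Q θ τ|
  have hgood : ∀ ε > 0, ∃ η > 0, ∀ n, ∀ᵐ ω ∂P, (∀ τ, dist (D τ n ω) 0 < η) →
      τhat n ω = τ0 ∧ dist (θtilde n (τhat n ω) ω) (θstar τ0) < ε := by
    intro ε hε
    obtain ⟨a, hca, ha⟩ :=
      exists_gt_forall_le_away_from_strict_min hΘcomp hQcont (hθstar_uniq τ0) hident hε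
    refine ⟨(a - Q (θstar τ0) τ0) / 3, by linarith, fun n => ?_⟩
    filter_upwards [ae_all_iff.2 (hθtilde_min n), hτhat_min n] with ω hθω hτω hsmall
    have happrox : ∀ τ, ∀ θ ∈ Θ, |Qn n θ τ ω - Q θ τ| ≤ (a - Q (θstar τ0) τ0) / 3 :=
      fun τ θ hθ => (hΘcomp.le_iSup_of_continuousOn ((hQncont n τ ω).sub (hQcont τ)).abs hθ).trans
        ((le_abs_self _).trans (Real.dist_0_eq_abs (D τ n ω) ▸ hsmall τ).le)
    by_contra hbad
    linarith [ha _ (hθω _).1 _ hbad,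
      twoStage_argmin_le_add happrox hθω hτω τ0 _ (hθstar_mem τ0)]
  refine ⟨?_, tendstoInMeasure_iff_dist.2 fun ε hε => ?_⟩
  · obtain ⟨η, hη, h⟩ := hgood 1 one_pos
    exact tendsto_measure_of_ae_imp_of_tendstoInMeasure hQnconv hη fun n =>
      (h n).mono fun ω hω hsmall hne => hne (hω hsmall).1
  · obtain ⟨η, hη, h⟩ := hgood ε hε
    exact tendsto_measure_of_ae_imp_of_tendstoInMeasure hQnconv hη fun n =>
      (h n).mono fun ω hω hsmall hfar => not_le.2 (hω hsmall).2 hfar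

/-- Joint consistency of grouped M-estimators under uniform convergence
(deterministic skeleton of the EM consistency theorem): under unique minimization for each
group assignment, identification of `τ₀`, and uniform convergence in P-measure of the sample
criteria, the estimated assignment and the plugged-in parameter estimator are consistent. -/
theorem grouped_Mestimation_joint_consistency
    {Ω : Type*} [MeasurableSpace Ω] (P : Measure Ω) [IsProbabilityMeasure P]
    {d : ℕ} (hd : 1 ≤ d)
    (Θ : Set (EuclideanSpace ℝ (Fin d))) (hΘne : Θ.Nonempty) (hΘcomp : IsCompact Θ)
    {𝒢 : Type*} [Fintype 𝒢] [Nonempty 𝒢] [MeasurableSpace 𝒢] [MeasurableSingletonClass 𝒢]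
    (Q : EuclideanSpace ℝ (Fin d) → 𝒢 → ℝ)
    (hQcont : ∀ τ, ContinuousOn (fun θ => Q θ τ) Θ)
    (θstar : 𝒢 → EuclideanSpace ℝ (Fin d))
    (hθstar_mem : ∀ τ, θstar τ ∈ Θ)
    (hθstar_min : ∀ τ, ∀ θ ∈ Θ, Q (θstar τ) τ ≤ Q θ τ)
    (hθstar_uniq : ∀ τ, ∀ θ ∈ Θ, θ ≠ θstar τ → Q (θstar τ) τ < Q θ τ)
    (τ0 : 𝒢)
    (hident : ∀ θ ∈ Θ, ∀ τ : 𝒢, τ ≠ τ0 → Q (θstar τ0) τ0 < Q θ τ)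
    (Qn : ℕ → EuclideanSpace ℝ (Fin d) → 𝒢 → Ω → ℝ)
    (hQncont : ∀ n τ ω, ContinuousOn (fun θ => Qn n θ τ ω) Θ)
    (hQnmeas : ∀ n θ τ, Measurable (fun ω => Qn n θ τ ω))
    (hQnconv : ∀ τ : 𝒢, TendstoInMeasure P
      (fun (n : ℕ) ω => ⨆ θ : Θ, |Qn n (θ : EuclideanSpace ℝ (Fin d)) τ ω
        - Q (θ : EuclideanSpace ℝ (Fin d)) τ|) atTop (fun _ => 0))
    (θtilde : ℕ → 𝒢 → Ω → EuclideanSpace ℝ (Fin d))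
    (hθtilde_meas : ∀ n τ, Measurable (fun ω => θtilde n τ ω))
    (hθtilde_min : ∀ n τ, ∀ᵐ ω ∂P, θtilde n τ ω ∈ Θ ∧
      ∀ θ ∈ Θ, Qn n (θtilde n τ ω) τ ω ≤ Qn n θ τ ω)
    (τhat : ℕ → Ω → 𝒢)
    (hτhat_meas : ∀ n, Measurable (τhat n))
    (hτhat_min : ∀ n, ∀ᵐ ω ∂P, ∀ τ : 𝒢,
      Qn n (θtilde n (τhat n ω) ω) (τhat n ω) ω ≤ Qn n (θtilde n τ ω) τ ω) :
    Tendsto (fun n => P {ω | τhat n ω ≠ τ0}) atTop (𝓝 0) ∧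
    TendstoInMeasure P (fun n ω => θtilde n (τhat n ω) ω) atTop (fun _ => θstar τ0) :=
  grouped_Mestimation_joint_consistency_general P Θ hΘcomp Q hQcont θstar hθstar_mem hθstar_uniq τ0
    hident Qn hQncont hQnconv θtilde hθtilde_min τhat hτhat_min
end
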